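/- arXiv:1705.05176 — 7 statements merged into one kernel-verified Lean document; each statement's English description precedes it below -/
import Mathlib

section
/- For every finite simple graph G there exists a convex drawing σ of G with 3·cr(σ) ≥ M(G); that is, the maximum convex crossing number of G is at least M(G)/3. -/
/-- Two edges (as unordered pairs of vertices) share no endpoint, i.e. they are independent. -/
def Sym2Indep {V : Type*} (e f : Sym2 V) : Prop := ∀ x : V, x ∈ e → x ∉ f

/-- `M(G)`: the number of unordered pairs of edges of `G` that share no endpoint. -/
noncomputable def indepPairs {V : Type*} (G : SimpleGraph V) : ℕ :=
  {p : Sym2 (Sym2 V) | ∃ e f : Sym2 V,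
    p = s(e, f) ∧ e ∈ G.edgeSet ∧ f ∈ G.edgeSet ∧ Sym2Indep e f}.ncard

/-- `z` lies on the open cyclic arc from `x` to `y` in `ZMod n`. -/
def InArc {n : ℕ} (x y z : ZMod n) : Prop :=
  0 < (z - x).val ∧ (z - x).val < (y - x).val

/-- The independent edges `e` and `f` cross in the convex drawing `σ`:
their endpoints alternate in the cyclic order. -/
def ConvexCross {V : Type*} {n : ℕ} (σ : V → ZMod n) (e f : Sym2 V) : Prop :=
  Sym2Indep e f ∧ ∃ a b c d : V, e = s(a, b) ∧ f = s(c, d) ∧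
    Xor' (InArc (σ a) (σ b) (σ c)) (InArc (σ a) (σ b) (σ d))

/-- `cr(σ)`: the number of unordered pairs of edges of `G` that cross in the
convex drawing `σ`. -/
noncomputable def convexCr {V : Type*} {n : ℕ} (G : SimpleGraph V) (σ : V → ZMod n) : ℕ :=
  {p : Sym2 (Sym2 V) | ∃ e f : Sym2 V,
    p = s(e, f) ∧ e ∈ G.edgeSet ∧ f ∈ G.edgeSet ∧ ConvexCross σ e f}.ncard

/-!
Fix one bijective drawing `e₀` and average over the drawings `e₀ ∘ π`, `π` a permutation of `V`.
Four distinct points on a circle can be paired into two chords in three ways, and at least one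
of these pairings crosses. For independent edges `ab`, `cd` and any drawing `σ`, the drawings
`σ`, `σ ∘ (b c)`, `σ ∘ (b d)` realise the three pairings of `σ a, σ b, σ c, σ d` by the fixed
edges, so right multiplication by these permutations shows that the pair crosses in at least a
third of all drawings. Hence the average of `cr` is at least `M(G) / 3`, and some drawing
attains it.
-/

open Finset Function

lemma Fin.natCast_zmod_injective (n : ℕ) : Injective (fun i : Fin n => ((i : ℕ) : ZMod n)) := by
  intro i j h
  have := congrArg ZMod.val h
  simp only [ZMod.val_natCast, Nat.mod_eq_of_lt i.2, Nat.mod_eq_of_lt j.2] at this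
  exact Fin.ext this

lemma Finset.exists_card_le_mul_card_filter {α β : Type*} [Fintype α] [Nonempty α]
    (s : Finset β) (r : α → β → Prop) [∀ a b, Decidable (r a b)] (m : ℕ)
    (h : ∀ b ∈ s, Fintype.card α ≤ m * #{a | r a b}) :
    ∃ a, #s ≤ m * #{b ∈ s | r a b} := by
  obtain ⟨a, -, ha⟩ := exists_le_of_sum_le univ_nonempty (s := univ)
    (f := fun _ : α => #s) (g := fun a => m * #{b ∈ s | r a b}) <| by
    calc ∑ _ : α, #s = ∑ _ ∈ s, Fintype.card α := by simp [mul_comm]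
      _ ≤ ∑ b ∈ s, m * #{a | r a b} := sum_le_sum h
      _ = ∑ a, m * #{b ∈ s | r a b} := by
        simp only [← mul_sum, card_filter]
        rw [sum_comm]
  exact ⟨a, ha⟩

lemma Finset.card_univ_le_card_mul_card_filter_mul {G : Type*} [Group G] [Fintype G]
    [DecidableEq G] (s : Finset G) (P : G → Prop) [DecidablePred P]
    (h : ∀ x, ∃ g ∈ s, P (x * g)) : Fintype.card G ≤ #s * #{x | P x} :=
  calc Fintype.card G ≤ #(s.biUnion fun g => {x | P (x * g)}) :=
        card_le_card fun x _ => by simpa using h x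
    _ ≤ ∑ g ∈ s, #{x | P (x * g)} := card_biUnion_le
    _ = ∑ _ ∈ s, #{x | P x} := sum_congr rfl fun g _ => by
        simp only [card_filter]
        exact Equiv.sum_comp (Equiv.mulRight g) fun x => if P x then 1 else 0
    _ = #s * #{x | P x} := by rw [sum_const, smul_eq_mul]

def ChordsCross {n : ℕ} (x y z w : ZMod n) : Prop :=
  Xor' (InArc x y z) (InArc x y w)

lemma chordsCross_or_chordsCross_or_chordsCross {n : ℕ} [NeZero n] {x y z w : ZMod n}
    (hxy : x ≠ y) (hxz : x ≠ z) (hxw : x ≠ w) (hyz : y ≠ z) (hyw : y ≠ w) (hzw : z ≠ w) :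
    ChordsCross x y z w ∨ ChordsCross x z y w ∨ ChordsCross x w z y := by
  have hval : ∀ u v : ZMod n, u ≠ v → (u - x).val ≠ (v - x).val := fun u v h huv =>
    h (by simpa using ZMod.val_injective n huv)
  have hpos : ∀ u : ZMod n, x ≠ u → 0 < (u - x).val := fun u h =>
    ZMod.val_pos.mpr (sub_ne_zero.mpr h.symm)
  have := hpos y hxy; have := hpos z hxz; have := hpos w hxw
  have := hval y z hyz; have := hval y w hyw; have := hval z w hzw
  unfold ChordsCross InArc Xor'
  simp only [xor_def]
  omega

def edgePairsWith {V : Type*} (G : SimpleGraph V) (R : Sym2 V → Sym2 V → Prop) :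
    Set (Sym2 (Sym2 V)) :=
  {p | ∃ e f : Sym2 V, p = s(e, f) ∧ e ∈ G.edgeSet ∧ f ∈ G.edgeSet ∧ R e f}

lemma indepPairs_eq_ncard {V : Type*} (G : SimpleGraph V) :
    indepPairs G = (edgePairsWith G Sym2Indep).ncard := rfl

lemma convexCr_eq_ncard {V : Type*} {n : ℕ} (G : SimpleGraph V) (σ : V → ZMod n) :
    convexCr G σ = (edgePairsWith G (ConvexCross σ)).ncard := rfl

lemma edgePairsWith_mono {V : Type*} (G : SimpleGraph V) {R R' : Sym2 V → Sym2 V → Prop}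
    (h : ∀ e f, R e f → R' e f) : edgePairsWith G R ⊆ edgePairsWith G R' :=
  fun _ ⟨e, f, hp, he, hf, hR⟩ => ⟨e, f, hp, he, hf, h e f hR⟩

lemma exists_perm_convexCross {V : Type*} [Fintype V] [DecidableEq V] {n : ℕ} [NeZero n]
    {a b c d : V} (hab : a ≠ b) (hcd : c ≠ d) (hind : Sym2Indep s(a, b) s(c, d))
    {σ : V → ZMod n} (hσ : Injective σ) :
    ∃ π ∈ ({1, Equiv.swap b c, Equiv.swap b d} : Finset (Equiv.Perm V)),
      ConvexCross (σ ∘ π) s(a, b) s(c, d) := by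
  have hac : a ≠ c := fun h => hind a (Sym2.mem_mk_left _ _) (h ▸ Sym2.mem_mk_left _ _)
  have had : a ≠ d := fun h => hind a (Sym2.mem_mk_left _ _) (h ▸ Sym2.mem_mk_right _ _)
  have hbc : b ≠ c := fun h => hind b (Sym2.mem_mk_right _ _) (h ▸ Sym2.mem_mk_left _ _)
  have hbd : b ≠ d := fun h => hind b (Sym2.mem_mk_right _ _) (h ▸ Sym2.mem_mk_right _ _)
  rcases chordsCross_or_chordsCross_or_chordsCross (hσ.ne hab) (hσ.ne hac) (hσ.ne had)
    (hσ.ne hbc) (hσ.ne hbd) (hσ.ne hcd) with h | h | h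
  · exact ⟨1, by simp, hind, a, b, c, d, rfl, rfl, h⟩
  · refine ⟨Equiv.swap b c, by simp, hind, a, b, c, d, rfl, rfl, ?_⟩
    simpa [ChordsCross, Equiv.swap_apply_of_ne_of_ne, hac, hab, hcd.symm, had.symm, hbd.symm]
      using h
  · refine ⟨Equiv.swap b d, by simp, hind, a, b, c, d, rfl, rfl, ?_⟩
    simpa [ChordsCross, Equiv.swap_apply_of_ne_of_ne, had, hab, hcd, hac.symm, hbc.symm]
      using h

lemma exists_perms_convexCross_of_mem_edgePairsWith {V : Type*} [Fintype V] [DecidableEq V]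
    {n : ℕ} [NeZero n] {G : SimpleGraph V} {p : Sym2 (Sym2 V)}
    (hp : p ∈ edgePairsWith G Sym2Indep) :
    ∃ T : Finset (Equiv.Perm V), #T ≤ 3 ∧ ∀ σ : V → ZMod n, Injective σ →
      ∃ π ∈ T, p ∈ edgePairsWith G (ConvexCross (σ ∘ π)) := by
  obtain ⟨e, f, rfl, he, hf, hind⟩ := hp
  induction e with | h a b => ?_
  induction f with | h c d => ?_
  refine ⟨{1, Equiv.swap b c, Equiv.swap b d}, card_le_three, fun σ hσ => ?_⟩
  obtain ⟨π, hπ, hcross⟩ := exists_perm_convexCross (G.mem_edgeSet.mp he).ne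
    (G.mem_edgeSet.mp hf).ne hind hσ
  exact ⟨π, hπ, _, _, rfl, he, hf, hcross⟩

/-- Every finite simple graph `G` has a convex drawing `σ` with `3 · cr(σ) ≥ M(G)`. -/
theorem convex_drawing_third_of_indep_pairs {V : Type*} [Fintype V] (G : SimpleGraph V) :
    ∃ σ : V → ZMod (Fintype.card V), Function.Injective σ ∧
      indepPairs G ≤ 3 * convexCr G σ := by
  classical
  let e₀ : V ↪ ZMod (Fintype.card V) :=
    (Fintype.equivFin V).toEmbedding.trans ⟨_, Fin.natCast_zmod_injective _⟩
  obtain ⟨π, hπ⟩ := exists_card_le_mul_card_filter (α := Equiv.Perm V)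
    (edgePairsWith G Sym2Indep).toFinset
    (fun π p => p ∈ edgePairsWith G (ConvexCross (e₀ ∘ π))) 3 <| fun p hp => by
      -- a vertex exists, so `ZMod (Fintype.card V)` is a genuine cycle rather than `ℤ`
      have : NeZero (Fintype.card V) := by
        obtain ⟨e, -, -, he, -⟩ := Set.mem_toFinset.mp hp
        have : Nonempty V := ⟨e.out.1⟩
        exact ⟨Fintype.card_ne_zero⟩
      obtain ⟨T, hT, hcross⟩ := exists_perms_convexCross_of_mem_edgePairsWith
        (n := Fintype.card V) (Set.mem_toFinset.mp hp)
      calc Fintype.card (Equiv.Perm V) ≤ #T * _ := card_univ_le_card_mul_card_filter_mul T _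
            fun x => hcross _ (e₀.injective.comp x.injective)
        _ ≤ 3 * _ := Nat.mul_le_mul_right _ hT
  refine ⟨e₀ ∘ π, e₀.injective.comp π.injective, ?_⟩
  rw [indepPairs_eq_ncard, convexCr_eq_ncard, Set.ncard_eq_toFinset_card',
    Set.ncard_eq_toFinset_card']
  convert hπ using 3
  ext p
  simpa using @edgePairsWith_mono _ G _ _ (fun _ _ h => h.1) p
end

section
/- If a finite simple graph G has chromatic number at most 3 (i.e., G admits a proper 3-coloring), then there exists a convex drawing σ of G with 2·cr(σ) ≥ M(G). -/
open Finset
open scoped symmDiff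

lemma ZMod.val_natCast_sub_natCast {n x z : ℕ} (hx : x < n) (hz : z < n) :
    ((z : ZMod n) - x).val = if x ≤ z then z - x else z + n - x := by
  have hcast : (z : ZMod n) - x = ((if x ≤ z then z - x else z + n - x : ℕ) : ZMod n) := by
    split_ifs with h
    · rw [Nat.cast_sub h]
    · rw [Nat.cast_sub (by omega), Nat.cast_add, ZMod.natCast_self, add_zero]
  rw [hcast, ZMod.val_natCast_of_lt (by split_ifs <;> omega)]

lemma inArc_natCast_iff {n x y z : ℕ} (hx : x < n) (hy : y < n) (hz : z < n) :
    InArc (x : ZMod n) y z ↔ sbtw (x : ℤ) z y := by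
  rw [InArc, ZMod.val_natCast_sub_natCast hx hz, ZMod.val_natCast_sub_natCast hx hy, Int.sbtw_iff]
  split_ifs <;> omega

lemma xor_sbtw_reflect_iff {m r A B C D : ℤ} (hA : |A - m| < r) (hC : |C - m| < r)
    (hB : r ≤ |B - m|) (hD : r ≤ |D - m|) (hAC : A ≠ C) :
    Xor (sbtw (2 * m - A) (2 * m - C) B) (sbtw (2 * m - A) D B) ↔
      ¬ Xor (sbtw A C B) (sbtw A D B) := by
  rw [abs_lt] at hA hC
  rw [le_abs'] at hB hD
  simp only [xor_def, Int.sbtw_iff]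
  rcases hB with hB | hB <;> rcases hD with hD | hD <;> rcases hAC.lt_or_gt with h | h <;> omega

lemma ncard_le_two_mul_ncard_of_involutive {T : Type*} [Finite T] {P : T → Prop} {f : T → T}
    (hf : Function.Involutive f) (hP : ∀ t, P t ∨ P (f t)) :
    Nat.card T ≤ 2 * {t | P t}.ncard := by
  have hcover : Set.univ = {t | P t} ∪ f ⁻¹' {t | P t} := by
    ext t; simpa using hP t
  calc Nat.card T = (Set.univ : Set T).ncard := (Set.ncard_univ T).symm
    _ ≤ {t | P t}.ncard + (f ⁻¹' {t | P t}).ncard := hcover ▸ Set.ncard_union_le _ _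
    _ = 2 * {t | P t}.ncard := by
      rw [← hf.image_eq_preimage_symm, Set.ncard_image_of_injective _ hf.injective, two_mul]

lemma exists_ncard_le_two_mul_ncard {X T : Type*} [Finite X] [Finite T] [Nonempty T]
    {S : Set X} {C : T → Set X} (h : ∀ x ∈ S, Nat.card T ≤ 2 * {t | x ∈ C t}.ncard) :
    ∃ t, S.ncard ≤ 2 * (C t).ncard := by
  classical
  have := Fintype.ofFinite X
  have := Fintype.ofFinite T
  have hsum : ∑ _t : T, S.ncard ≤ ∑ t : T, 2 * (C t).ncard := calc
    ∑ _t : T, S.ncard = ∑ _x ∈ S.toFinset, Nat.card T := by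
      simp [Set.ncard_eq_toFinset_card', mul_comm]
    _ ≤ ∑ x ∈ S.toFinset, 2 * #(univ.bipartiteAbove (fun x t => x ∈ C t) x) :=
      sum_le_sum fun x hx => by
        simpa [bipartiteAbove, Set.ncard_eq_toFinset_card'] using h x (Set.mem_toFinset.1 hx)
    _ = ∑ t : T, 2 * #(S.toFinset.bipartiteBelow (fun x t => x ∈ C t) t) := by
      rw [← mul_sum, ← mul_sum, sum_card_bipartiteAbove_eq_sum_card_bipartiteBelow]
    _ ≤ ∑ t : T, 2 * (C t).ncard :=
      sum_le_sum fun t _ => Nat.mul_le_mul_left 2 <| by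
        rw [Set.ncard_eq_toFinset_card']
        exact card_le_card fun x hx => by simp_all [bipartiteBelow]
  obtain ⟨t, -, ht⟩ := exists_le_of_sum_le univ_nonempty hsum
  exact ⟨t, ht⟩

section OrderRank

variable {V β : Type*} [Fintype V] [LinearOrder β]

def orderRank (k : V → β) (v : V) : ℕ := #{w | k w < k v}

lemma orderRank_lt_card (k : V → β) (v : V) : orderRank k v < Fintype.card V :=
  card_lt_univ_of_notMem (x := v) (by simp)

lemma orderRank_lt_orderRank_iff (k : V → β) {v w : V} :
    orderRank k v < orderRank k w ↔ k v < k w := by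
  constructor
  · intro h
    by_contra! hle
    have : orderRank k w ≤ orderRank k v :=
      card_le_card fun u hu => by
        simp only [mem_filter, mem_univ, true_and] at hu ⊢
        exact hu.trans_le hle
    omega
  · intro h
    refine card_lt_card (ssubset_iff_of_subset ?_ |>.2 ⟨v, by simp [h], by simp⟩)
    intro u hu
    simp only [mem_filter, mem_univ, true_and] at hu ⊢
    exact hu.trans h

lemma orderRank_injective {k : V → β} (hk : Function.Injective k) :
    Function.Injective (orderRank k) := fun _ _ h =>
  hk <| le_antisymm (not_lt.1 fun hlt => ((orderRank_lt_orderRank_iff k).2 hlt).ne' h)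
    (not_lt.1 fun hlt => ((orderRank_lt_orderRank_iff k).2 hlt).ne h)

end OrderRank

section BlockDrawing

variable {V : Type*} [Fintype V] {k : ℕ}

/-- Colour class `i` occupies the block `(2ni - n, 2ni + n)`, `n = |V|`, in reverse order when
`i ∈ R`; the blocks are spaced so that reversing one is a reflection about its centre. -/
noncomputable def blockKey (c : V → Fin k) (R : Finset (Fin k)) (v : V) : ℤ :=
  2 * Fintype.card V * (c v : ℕ) +
    if c v ∈ R then -((Fintype.equivFin V v : ℕ) : ℤ)
    else ((Fintype.equivFin V v : ℕ) : ℤ)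

lemma abs_blockKey_sub_lt_iff (c : V → Fin k) (R : Finset (Fin k)) (v : V) (i : Fin k) :
    |blockKey c R v - 2 * Fintype.card V * (i : ℕ)| < Fintype.card V ↔ c v = i := by
  have hx : ((Fintype.equivFin V v : ℕ) : ℤ) < Fintype.card V := by
    exact_mod_cast (Fintype.equivFin V v).isLt
  have hx0 : (0 : ℤ) ≤ (Fintype.equivFin V v : ℕ) := by positivity
  have hsplit : blockKey c R v - 2 * Fintype.card V * (i : ℕ) =
      2 * Fintype.card V * (((c v : ℕ) : ℤ) - (i : ℕ)) +
        (if c v ∈ R then -((Fintype.equivFin V v : ℕ) : ℤ)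
          else ((Fintype.equivFin V v : ℕ) : ℤ)) := by
    rw [blockKey]; ring
  rw [hsplit, abs_lt]
  constructor
  · intro h
    by_contra hne
    have : ((c v : ℕ) : ℤ) ≠ (i : ℕ) := by exact_mod_cast Fin.val_injective.ne hne
    rcases this.lt_or_gt with hlt | hlt <;> split_ifs at h <;> nlinarith
  · rintro rfl
    split_ifs <;> constructor <;> linarith

lemma blockKey_injective (c : V → Fin k) (R : Finset (Fin k)) :
    Function.Injective (blockKey c R) := by
  intro v w h
  have hc : c w = c v := (abs_blockKey_sub_lt_iff c R w (c v)).1 <| by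
    rw [← h]; exact (abs_blockKey_sub_lt_iff c R v (c v)).2 rfl
  have hx : ((Fintype.equivFin V v : ℕ) : ℤ) = (Fintype.equivFin V w : ℕ) := by
    rw [blockKey, blockKey, hc] at h; split_ifs at h <;> linarith
  exact (Fintype.equivFin V).injective (Fin.ext (by exact_mod_cast hx))

lemma blockKey_symmDiff_singleton (c : V → Fin k) (R : Finset (Fin k)) (i : Fin k) (v : V) :
    blockKey c (R ∆ {i}) v =
      if c v = i then 2 * (2 * Fintype.card V * (i : ℕ)) - blockKey c R v
      else blockKey c R v := by
  by_cases hv : c v = i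
  · subst hv
    by_cases hR : c v ∈ R <;> simp [blockKey, Finset.mem_symmDiff, hR] <;> ring
  · simp [blockKey, Finset.mem_symmDiff, hv]

noncomputable def blockDrawing (c : V → Fin k) (R : Finset (Fin k)) (v : V) :
    ZMod (Fintype.card V) :=
  (orderRank (blockKey c R) v : ℕ)

lemma blockDrawing_injective (c : V → Fin k) (R : Finset (Fin k)) :
    Function.Injective (blockDrawing c R) := by
  intro v w h
  apply orderRank_injective (blockKey_injective c R)
  have := congrArg ZMod.val h
  rwa [blockDrawing, blockDrawing, ZMod.val_natCast_of_lt (orderRank_lt_card _ _),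
    ZMod.val_natCast_of_lt (orderRank_lt_card _ _)] at this

lemma inArc_blockDrawing_iff (c : V → Fin k) (R : Finset (Fin k)) (a b x : V) :
    InArc (blockDrawing c R a) (blockDrawing c R b) (blockDrawing c R x) ↔
      sbtw (blockKey c R a) (blockKey c R x) (blockKey c R b) := by
  rw [blockDrawing, blockDrawing, blockDrawing,
    inArc_natCast_iff (orderRank_lt_card _ _) (orderRank_lt_card _ _) (orderRank_lt_card _ _)]
  simp only [Int.sbtw_iff, Nat.cast_lt, orderRank_lt_orderRank_iff]

end BlockDrawing

section Crossing

variable {V : Type*} [Fintype V] {G : SimpleGraph V}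

lemma convexCross_or_convexCross_symmDiff {k : ℕ} (C : G.Coloring (Fin k)) {a b x y : V}
    (hab : G.Adj a b) (hxy : G.Adj x y) (hind : Sym2Indep s(a, b) s(x, y)) (hax : C a = C x)
    (R : Finset (Fin k)) :
    ConvexCross (blockDrawing C R) s(a, b) s(x, y) ∨
      ConvexCross (blockDrawing C (R ∆ {C a})) s(a, b) s(x, y) := by
  have hne : a ≠ x := fun h => hind a (Sym2.mem_mk_left a b) (h ▸ Sym2.mem_mk_left x y)
  have hb : C b ≠ C a := (C.valid hab).symm
  have hy : C y ≠ C a := hax ▸ (C.valid hxy).symm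
  have hreflect := xor_sbtw_reflect_iff (r := Fintype.card V)
    ((abs_blockKey_sub_lt_iff C R a _).2 rfl) ((abs_blockKey_sub_lt_iff C R x _).2 hax.symm)
    (not_lt.1 <| (abs_blockKey_sub_lt_iff C R b _).not.2 hb)
    (not_lt.1 <| (abs_blockKey_sub_lt_iff C R y _).not.2 hy) ((blockKey_injective C R).ne hne)
  by_cases h : Xor (sbtw (blockKey C R a) (blockKey C R x) (blockKey C R b))
      (sbtw (blockKey C R a) (blockKey C R y) (blockKey C R b))
  · refine Or.inl ⟨hind, a, b, x, y, rfl, rfl, ?_⟩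
    rw [inArc_blockDrawing_iff, inArc_blockDrawing_iff]
    exact h
  · refine Or.inr ⟨hind, a, b, x, y, rfl, rfl, ?_⟩
    simp only [inArc_blockDrawing_iff, blockKey_symmDiff_singleton, if_pos hax.symm, if_neg hb,
      if_neg hy]
    exact hreflect.2 h

lemma fin_three_eq_or_eq_or_eq_or_eq_of_ne_of_ne {p q r s : Fin 3} (hpq : p ≠ q) (hrs : r ≠ s) :
    p = r ∨ p = s ∨ q = r ∨ q = s := by
  revert p q r s; decide

lemma exists_convexCross_or_convexCross_symmDiff (C : G.Coloring (Fin 3)) {e f : Sym2 V}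
    (he : e ∈ G.edgeSet) (hf : f ∈ G.edgeSet) (hind : Sym2Indep e f) :
    ∃ i, ∀ R, ConvexCross (blockDrawing C R) e f ∨
      ConvexCross (blockDrawing C (R ∆ {i})) e f := by
  induction e using Sym2.ind with | _ a b => ?_
  induction f using Sym2.ind with | _ x y => ?_
  rw [SimpleGraph.mem_edgeSet] at he hf
  rcases fin_three_eq_or_eq_or_eq_or_eq_of_ne_of_ne (C.valid he) (C.valid hf) with h | h | h | h
  · exact ⟨_, convexCross_or_convexCross_symmDiff C he hf hind h⟩
  · rw [Sym2.eq_swap (a := x)] at hind ⊢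
    exact ⟨_, convexCross_or_convexCross_symmDiff C he hf.symm hind h⟩
  · rw [Sym2.eq_swap (a := a)] at hind ⊢
    exact ⟨_, convexCross_or_convexCross_symmDiff C he.symm hf hind h⟩
  · rw [Sym2.eq_swap (a := a), Sym2.eq_swap (a := x)] at hind ⊢
    exact ⟨_, convexCross_or_convexCross_symmDiff C he.symm hf.symm hind h⟩

end Crossing

/-- If a finite simple graph `G` admits a proper 3-coloring, then there is a convex
drawing `σ` of `G` with `2 · cr(σ) ≥ M(G)`. -/
theorem convex_drawing_half_of_indep_pairs_of_colorable {V : Type*} [Fintype V]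
    (G : SimpleGraph V) (hG : G.Colorable 3) :
    ∃ σ : V → ZMod (Fintype.card V), Function.Injective σ ∧
      indepPairs G ≤ 2 * convexCr G σ := by
  obtain ⟨C⟩ := hG
  obtain ⟨R, hR⟩ :
      ∃ R : Finset (Fin 3), indepPairs G ≤ 2 * convexCr G (blockDrawing C R) := by
    refine exists_ncard_le_two_mul_ncard ?_
    rintro _ ⟨e, f, rfl, he, hf, hind⟩
    obtain ⟨i, hi⟩ := exists_convexCross_or_convexCross_symmDiff C he hf hind
    exact ncard_le_two_mul_ncard_of_involutive (symmDiff_symmDiff_cancel_right {i} ·) fun R =>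
      (hi R).imp (⟨e, f, rfl, he, hf, ·⟩) (⟨e, f, rfl, he, hf, ·⟩)
  exact ⟨_, blockDrawing_injective C R, hR⟩
end

section
/- For every finite bipartite graph G with bipartition (X, Y), the maximum of cr(D) over all two-layer drawings D of G equals M(G) − bcr(G); that is, every two-layer drawing D satisfies cr(D) ≤ M(G) − bcr(G), and there exists a two-layer drawing D with cr(D) = M(G) − bcr(G). -/
/-- The strict order relation of a linear order, as a bare binary relation. -/
def ltOf {α : Type*} (l : LinearOrder α) : α → α → Prop :=
  letI := l; (· < ·)

/-- Two independent edges of a bipartite graph (given as pairs in `X × Y`) cross in the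
two-layer drawing determined by the strict orders `ltX` on `X` and `ltY` on `Y`. -/
def TLCross {X Y : Type*} (ltX : X → X → Prop) (ltY : Y → Y → Prop) (e f : X × Y) : Prop :=
  e.1 ≠ f.1 ∧ e.2 ≠ f.2 ∧
    ((ltX e.1 f.1 ∧ ltY f.2 e.2) ∨ (ltX f.1 e.1 ∧ ltY e.2 f.2))

/-- `cr(D)`: the number of unordered pairs of edges of the bipartite graph with edge set `E`
that cross in the two-layer drawing `D = (ltX, ltY)`. -/
noncomputable def tlCr {X Y : Type*} (E : Set (X × Y))
    (ltX : X → X → Prop) (ltY : Y → Y → Prop) : ℕ :=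
  {p : Sym2 (X × Y) | ∃ e f : X × Y,
    p = s(e, f) ∧ e ∈ E ∧ f ∈ E ∧ TLCross ltX ltY e f}.ncard

/-- `M(G)`: the number of unordered pairs of edges of the bipartite graph with edge set `E`
that share no endpoint. -/
noncomputable def tlIndepPairs {X Y : Type*} (E : Set (X × Y)) : ℕ :=
  {p : Sym2 (X × Y) | ∃ e f : X × Y,
    p = s(e, f) ∧ e ∈ E ∧ f ∈ E ∧ e.1 ≠ f.1 ∧ e.2 ≠ f.2}.ncard

/-- `bcr(G)`: the minimum number of crossings over all two-layer drawings of the bipartite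
graph with edge set `E`. -/
noncomputable def bcr {X Y : Type*} (E : Set (X × Y)) : ℕ :=
  sInf {k : ℕ | ∃ (lX : LinearOrder X) (lY : LinearOrder Y), tlCr E (ltOf lX) (ltOf lY) = k}

/-- The dual of a linear order, as a linear order on the same type. -/
def dualLO {α : Type*} (l : LinearOrder α) : LinearOrder α :=
  @OrderDual.instLinearOrder α l

lemma ltOf_dualLO {α : Type*} (l : LinearOrder α) (a b : α) :
    ltOf (dualLO l) a b ↔ ltOf l b a := Iff.rfl

lemma TLCross_symm {X Y : Type*} (ltX : X → X → Prop) (ltY : Y → Y → Prop) {e f : X × Y}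
    (h : TLCross ltX ltY e f) : TLCross ltX ltY f e := by
  obtain ⟨h1, h2, h3⟩ := h
  exact ⟨h1.symm, h2.symm, h3.symm⟩

/-- Key partition lemma: the crossing pairs of a drawing and of the drawing with the
`Y`-order reversed partition the independent pairs. -/
lemma key_partition {X Y : Type*} [Fintype X] [Fintype Y] (E : Set (X × Y))
    (lX : LinearOrder X) (lY : LinearOrder Y) :
    tlCr E (ltOf lX) (ltOf lY) + tlCr E (ltOf lX) (ltOf (dualLO lY)) = tlIndepPairs E := by
  classical
  set A : Set (Sym2 (X × Y)) := {p | ∃ e f : X × Y,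
    p = s(e, f) ∧ e ∈ E ∧ f ∈ E ∧ TLCross (ltOf lX) (ltOf lY) e f} with hA
  set B : Set (Sym2 (X × Y)) := {p | ∃ e f : X × Y,
    p = s(e, f) ∧ e ∈ E ∧ f ∈ E ∧ TLCross (ltOf lX) (ltOf (dualLO lY)) e f} with hB
  set I : Set (Sym2 (X × Y)) := {p | ∃ e f : X × Y,
    p = s(e, f) ∧ e ∈ E ∧ f ∈ E ∧ e.1 ≠ f.1 ∧ e.2 ≠ f.2} with hI
  have hunion : A ∪ B = I := by
    ext p
    constructor
    · rintro (⟨e, f, rfl, he, hf, h1, h2, -⟩ | ⟨e, f, rfl, he, hf, h1, h2, -⟩) <;>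
        exact ⟨e, f, rfl, he, hf, h1, h2⟩
    · rintro ⟨e, f, rfl, he, hf, h1, h2⟩
      letI := lX
      letI := lY
      rcases lt_or_gt_of_ne h1 with hx | hx <;> rcases lt_or_gt_of_ne h2 with hy | hy
      · exact Or.inr ⟨e, f, rfl, he, hf, h1, h2, Or.inl ⟨hx, hy⟩⟩
      · exact Or.inl ⟨e, f, rfl, he, hf, h1, h2, Or.inl ⟨hx, hy⟩⟩
      · exact Or.inl ⟨e, f, rfl, he, hf, h1, h2, Or.inr ⟨hx, hy⟩⟩
      · exact Or.inr ⟨e, f, rfl, he, hf, h1, h2, Or.inr ⟨hx, hy⟩⟩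
  have hdisj : Disjoint A B := by
    rw [Set.disjoint_left]
    rintro p ⟨e, f, rfl, he, hf, hcA⟩ ⟨e', f', hp, he', hf', hcB⟩
    letI := lX
    letI := lY
    have hcB' : TLCross (ltOf lX) (ltOf (dualLO lY)) e f := by
      rcases Sym2.eq_iff.mp hp with ⟨h1, h2⟩ | ⟨h1, h2⟩
      · rwa [← h1, ← h2] at hcB
      · rw [← h2, ← h1] at hcB; exact TLCross_symm _ _ hcB
    obtain ⟨-, -, h3⟩ := hcA
    obtain ⟨-, -, h4⟩ := hcB'
    simp only [ltOf_dualLO] at h4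
    rcases h3 with ⟨hx, hy⟩ | ⟨hx, hy⟩ <;> rcases h4 with ⟨hx', hy'⟩ | ⟨hx', hy'⟩ <;>
      first
        | exact absurd hy (not_lt_of_gt hy')
        | exact absurd hx (not_lt_of_gt hx')
  have hAfin : A.Finite := Set.toFinite A
  have hBfin : B.Finite := Set.toFinite B
  have := Set.ncard_union_eq hdisj hAfin hBfin
  rw [hunion] at this
  exact this.symm

/-- The maximum number of crossings over all two-layer drawings of a finite bipartite graph
equals `M(G) - bcr(G)`. -/
theorem max_tlCr_eq_indepPairs_sub_bcr {X Y : Type*} [Fintype X] [Fintype Y]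
    (E : Set (X × Y)) :
    (∀ (lX : LinearOrder X) (lY : LinearOrder Y),
        tlCr E (ltOf lX) (ltOf lY) ≤ tlIndepPairs E - bcr E) ∧
    (∃ (lX : LinearOrder X) (lY : LinearOrder Y),
        tlCr E (ltOf lX) (ltOf lY) = tlIndepPairs E - bcr E) := by
  classical
  have hle : ∀ (lX : LinearOrder X) (lY : LinearOrder Y),
      bcr E ≤ tlCr E (ltOf lX) (ltOf lY) := fun lX lY =>
    Nat.sInf_le ⟨lX, lY, rfl⟩
  constructor
  · intro lX lY
    have hk := key_partition E lX lY
    have := hle lX (dualLO lY)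
    omega
  · have hne : {k : ℕ | ∃ (lX : LinearOrder X) (lY : LinearOrder Y),
        tlCr E (ltOf lX) (ltOf lY) = k}.Nonempty := by
      refine ⟨_, LinearOrder.lift' (Fintype.equivFin X) (Equiv.injective _),
        LinearOrder.lift' (Fintype.equivFin Y) (Equiv.injective _), rfl⟩
    obtain ⟨lX, lY, hmin⟩ := Nat.sInf_mem hne
    have hk := key_partition E lX lY
    have hmin' : tlCr E (ltOf lX) (ltOf lY) = bcr E := hmin
    exact ⟨lX, dualLO lY, by omega⟩
end

section
/- Let p₁, …, pₙ be n distinct points in ℝ² with no three collinear, regarded as a straight-line drawing ρ of the complete graph K_n. Then cr(ρ) ≤ C(n,4), and cr(ρ) = C(n,4) if and only if the points p₁, …, pₙ are in convex position (every pᵢ is an extreme point of the convex hull of {p₁, …, pₙ}). -/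
/-- The independent edges `e` and `f` cross in the straight-line drawing `ρ`:
the corresponding open segments have a common point. -/
def SLCross {V : Type*} (ρ : V → ℝ × ℝ) (e f : Sym2 V) : Prop :=
  Sym2Indep e f ∧ ∃ a b c d : V, e = s(a, b) ∧ f = s(c, d) ∧
    (openSegment ℝ (ρ a) (ρ b) ∩ openSegment ℝ (ρ c) (ρ d)).Nonempty

/-- `cr(ρ)`: the number of unordered pairs of edges of `G` that cross in the
straight-line drawing `ρ`. -/
noncomputable def slCr {V : Type*} (G : SimpleGraph V) (ρ : V → ℝ × ℝ) : ℕ :=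
  {p : Sym2 (Sym2 V) | ∃ e f : Sym2 V,
    p = s(e, f) ∧ e ∈ G.edgeSet ∧ f ∈ G.edgeSet ∧ SLCross ρ e f}.ncard

/-- `ρ` is a straight-line drawing of `G`: it is injective and no vertex image lies on the
closed segment joining the images of the endpoints of an edge not containing it. -/
def IsSLDrawing {V : Type*} (G : SimpleGraph V) (ρ : V → ℝ × ℝ) : Prop :=
  Function.Injective ρ ∧
    ∀ a b : V, G.Adj a b → ∀ v : V, v ≠ a → v ≠ b → ρ v ∉ segment ℝ (ρ a) (ρ b)

namespace SLMain


def dt (a b c : ℝ × ℝ) : ℝ := (b.1-a.1)*(c.2-a.2)-(b.2-a.2)*(c.1-a.1)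
lemma dt_cyc (a b c : ℝ × ℝ) : dt a b c = dt b c a := by unfold dt; ring
lemma dt_combo (a b c d : ℝ × ℝ) {s t : ℝ} (h : s + t = 1) :
    dt a b (s • c + t • d) = s * dt a b c + t * dt a b d := by
  have hs : s = 1 - t := by linarith
  subst hs; simp [dt, Prod.smul_def, smul_eq_mul]; ring

lemma sign_helper {u v F G : ℝ} (hu : 0 < u) (hv : 0 < v) (h : u * F + v * G = 0)
    (hF : F ≠ 0) : F * G < 0 := by
  rcases hF.lt_or_gt with hF0 | hF0
  · have hvG : 0 < v * G := by nlinarith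
    have hG : 0 < G := by by_contra hG; push_neg at hG; nlinarith
    exact mul_neg_of_neg_of_pos hF0 hG
  · have hvG : v * G < 0 := by nlinarith
    have hG : G < 0 := by by_contra hG; push_neg at hG; nlinarith
    exact mul_neg_of_pos_of_neg hF0 hG

lemma root_helper {F G : ℝ} (h : F * G < 0) : ∃ t : ℝ, 0 < t ∧ t < 1 ∧ (1-t)*F + t*G = 0 := by
  have hFG : F - G ≠ 0 := by intro h'; have : F = G := by linarith
                             rw [this] at h; nlinarith [sq_nonneg G]
  refine ⟨F / (F - G), ?_, ?_, ?_⟩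
  · rcases mul_neg_iff.mp h with ⟨h1, h2⟩ | ⟨h1, h2⟩
    · exact div_pos h1 (by linarith)
    · exact div_pos_of_neg_of_neg h1 (by linarith)
  · rcases mul_neg_iff.mp h with ⟨h1, h2⟩ | ⟨h1, h2⟩
    · rw [div_lt_one (by linarith)]; linarith
    · rw [div_lt_one_of_neg (by linarith)]; linarith
  · field_simp; ring

lemma eq_of_on_two_lines {a b c d x y : ℝ × ℝ} (h1 : dt a b x = 0) (h2 : dt a b y = 0)
    (h3 : dt c d x = 0) (h4 : dt c d y = 0) (hD : dt a b c ≠ dt a b d) : x = y := by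
  have e1 : (b.1-a.1)*(x.2-y.2) - (b.2-a.2)*(x.1-y.1) = 0 := by
    unfold dt at h1 h2; linear_combination h1 - h2
  have e2 : (d.1-c.1)*(x.2-y.2) - (d.2-c.2)*(x.1-y.1) = 0 := by
    unfold dt at h3 h4; linear_combination h3 - h4
  have hD' : (b.1-a.1)*(d.2-c.2) - (b.2-a.2)*(d.1-c.1) ≠ 0 := by
    intro h; apply hD; unfold dt; linarith
  have k1 : ((b.1-a.1)*(d.2-c.2) - (b.2-a.2)*(d.1-c.1)) * (x.1 - y.1) = 0 := by
    linear_combination (d.1-c.1)*e1 - (b.1-a.1)*e2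
  have k2 : ((b.1-a.1)*(d.2-c.2) - (b.2-a.2)*(d.1-c.1)) * (x.2 - y.2) = 0 := by
    linear_combination (d.2-c.2)*e1 - (b.2-a.2)*e2
  have hx1 : x.1 = y.1 := by
    rcases mul_eq_zero.mp k1 with h | h
    · exact absurd h hD'
    · linarith
  have hx2 : x.2 = y.2 := by
    rcases mul_eq_zero.mp k2 with h | h
    · exact absurd h hD'
    · linarith
  exact Prod.ext hx1 hx2

lemma cross_iff {a b c d : ℝ × ℝ} (hF : dt a b c ≠ 0) (hG : dt a b d ≠ 0)
    (hP : dt a c d ≠ 0) (hQ : dt b c d ≠ 0) :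
    (openSegment ℝ a b ∩ openSegment ℝ c d).Nonempty ↔
      dt a b c * dt a b d < 0 ∧ dt a c d * dt b c d < 0 := by
  have hPcd : dt c d a = dt a c d := by unfold dt; ring
  have hQcd : dt c d b = dt b c d := by unfold dt; ring
  constructor
  · rintro ⟨x, hx1, hx2⟩
    rw [openSegment] at hx1 hx2
    obtain ⟨u, v, hu, hv, huv, hx⟩ := hx1
    obtain ⟨u', v', hu', hv', huv', hx'⟩ := hx2
    have habx : dt a b x = 0 := by
      rw [← hx, dt_combo a b a b huv]; unfold dt; ring
    have hcdx : dt c d x = 0 := by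
      rw [← hx', dt_combo c d c d huv']; unfold dt; ring
    have e1 : u' * dt a b c + v' * dt a b d = 0 := by
      rw [← dt_combo a b c d huv', hx']; exact habx
    have e2 : u * dt a c d + v * dt b c d = 0 := by
      rw [← hPcd, ← hQcd, ← dt_combo c d a b huv, hx]; exact hcdx
    exact ⟨sign_helper hu' hv' e1 hF, sign_helper hu hv e2 hP⟩
  · rintro ⟨h1, h2⟩
    obtain ⟨t, ht0, ht1, htF⟩ := root_helper h1
    obtain ⟨s, hs0, hs1, hsF⟩ := root_helper h2
    have hysum : (1 - t) + t = 1 := by ring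
    have hxsum : (1 - s) + s = 1 := by ring
    set y : ℝ × ℝ := (1 - t) • c + t • d with hy
    set x : ℝ × ℝ := (1 - s) • a + s • b with hx
    have haby : dt a b y = 0 := by rw [hy, dt_combo a b c d hysum]; exact htF
    have hcdx : dt c d x = 0 := by rw [hx, dt_combo c d a b hxsum, hPcd, hQcd]; exact hsF
    have habx : dt a b x = 0 := by rw [hx, dt_combo a b a b hxsum]; unfold dt; ring
    have hcdy : dt c d y = 0 := by rw [hy, dt_combo c d c d hysum]; unfold dt; ring
    have hFG : dt a b c ≠ dt a b d := by
      intro h; rw [h] at h1; nlinarith [sq_nonneg (dt a b d)]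
    have hxy : x = y := eq_of_on_two_lines habx haby hcdx hcdy hFG
    refine ⟨x, ⟨1 - s, s, by linarith, hs0, by ring, rfl⟩, ?_⟩
    rw [hxy]; exact ⟨1 - t, t, by linarith, ht0, by ring, rfl⟩


lemma collinear_of_dt_eq_zero {a b c : ℝ × ℝ} (h : dt a b c = 0) :
    Collinear ℝ ({a, b, c} : Set (ℝ × ℝ)) := by
  by_cases hab : b = a
  · have : ({a, b, c} : Set (ℝ × ℝ)) = {a, c} := by rw [hab]; simp
    rw [this]; exact collinear_pair ℝ a c
  · apply (collinear_iff_of_mem (Set.mem_insert a {b, c})).2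
    refine ⟨b - a, fun p hp => ?_⟩
    simp only [Set.mem_insert_iff, Set.mem_singleton_iff] at hp
    rcases hp with rfl | rfl | rfl
    · exact ⟨0, by simp⟩
    · exact ⟨1, by simp⟩
    · have hne : b.1 - a.1 ≠ 0 ∨ b.2 - a.2 ≠ 0 := by
        by_contra hcon; push_neg at hcon
        exact hab (Prod.ext (by linarith [hcon.1]) (by linarith [hcon.2]))
      rcases hne with h1 | h2
      · refine ⟨(p.1 - a.1)/(b.1 - a.1), ?_⟩
        unfold dt at h
        have e2 : (p.1 - a.1)/(b.1 - a.1) * (b.2 - a.2) = p.2 - a.2 := by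
          field_simp
          linear_combination -h
        have e1 : (p.1 - a.1)/(b.1 - a.1) * (b.1 - a.1) = p.1 - a.1 := by field_simp
        show p = _ + a
        ext
        · simp only [Prod.fst_add, Prod.smul_fst, Prod.fst_sub, smul_eq_mul]
          linarith [e1]
        · simp only [Prod.snd_add, Prod.smul_snd, Prod.snd_sub, smul_eq_mul]
          linarith [e2]
      · refine ⟨(p.2 - a.2)/(b.2 - a.2), ?_⟩
        unfold dt at h
        have e1 : (p.2 - a.2)/(b.2 - a.2) * (b.1 - a.1) = p.1 - a.1 := by
          field_simp
          linear_combination h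
        have e2 : (p.2 - a.2)/(b.2 - a.2) * (b.2 - a.2) = p.2 - a.2 := by field_simp
        show p = _ + a
        ext
        · simp only [Prod.fst_add, Prod.smul_fst, Prod.fst_sub, smul_eq_mul]
          linarith [e1]
        · simp only [Prod.snd_add, Prod.smul_snd, Prod.snd_sub, smul_eq_mul]
          linarith [e2]

lemma combo_mem_triple {a b c : ℝ × ℝ} {α β γ : ℝ} (hα : 0 ≤ α) (hβ : 0 ≤ β) (hγ : 0 ≤ γ)
    (hsum : α + β + γ = 1) : α • a + β • b + γ • c ∈ convexHull ℝ ({a, b, c} : Set (ℝ × ℝ)) := by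
  have hconv := convex_convexHull ℝ ({a, b, c} : Set (ℝ × ℝ))
  have ha : a ∈ convexHull ℝ ({a, b, c} : Set (ℝ × ℝ)) := subset_convexHull ℝ _ (by simp)
  have hb : b ∈ convexHull ℝ ({a, b, c} : Set (ℝ × ℝ)) := subset_convexHull ℝ _ (by simp)
  have hc : c ∈ convexHull ℝ ({a, b, c} : Set (ℝ × ℝ)) := subset_convexHull ℝ _ (by simp)
  by_cases hbc : β + γ = 0
  · have hβ0 : β = 0 := by linarith
    have hγ0 : γ = 0 := by linarith
    have hα1 : α = 1 := by linarith
    simp [hβ0, hγ0, hα1, ha]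
  · have hbc' : 0 < β + γ := lt_of_le_of_ne (by linarith) (Ne.symm hbc)
    have hw : (β/(β+γ)) • b + (γ/(β+γ)) • c ∈ convexHull ℝ ({a, b, c} : Set (ℝ × ℝ)) :=
      hconv hb hc (div_nonneg hβ (le_of_lt hbc')) (div_nonneg hγ (le_of_lt hbc'))
        (by field_simp)
    have key := hconv ha hw hα (le_of_lt hbc') (by linarith : α + (β + γ) = 1)
    convert key using 1
    rw [smul_add, smul_smul, smul_smul, mul_div_cancel₀ _ (ne_of_gt hbc'),
      mul_div_cancel₀ _ (ne_of_gt hbc'), add_assoc]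

lemma exists_combo_of_mem_triple {a b c d : ℝ × ℝ}
    (h : d ∈ convexHull ℝ ({a, b, c} : Set (ℝ × ℝ))) :
    ∃ α β γ : ℝ, 0 ≤ α ∧ 0 ≤ β ∧ 0 ≤ γ ∧ α + β + γ = 1 ∧ d = α • a + β • b + γ • c := by
  rw [show ({a, b, c} : Set (ℝ × ℝ)) = insert a {b, c} from rfl,
    convexHull_insert ⟨b, by simp⟩, convexHull_pair] at h
  rw [mem_convexJoin] at h
  obtain ⟨x, hx, z, hz, hdz⟩ := h
  rw [Set.mem_singleton_iff] at hx
  subst hx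
  obtain ⟨u, v, hu, hv, huv, hzuv⟩ := hz
  obtain ⟨s, t, hs, ht, hst, hdst⟩ := hdz
  refine ⟨s, t*u, t*v, hs, mul_nonneg ht hu, mul_nonneg ht hv, by nlinarith, ?_⟩
  rw [← hdst, ← hzuv, smul_add, smul_smul, smul_smul, add_assoc]


lemma dt_acb (a b c : ℝ × ℝ) : dt a c b = - dt a b c := by unfold dt; ring
lemma dt_cbd (b c d : ℝ × ℝ) : dt c b d = - dt b c d := by unfold dt; ring
lemma dt_adb (a b d : ℝ × ℝ) : dt a d b = - dt a b d := by unfold dt; ring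
lemma dt_adc (a c d : ℝ × ℝ) : dt a d c = - dt a c d := by unfold dt; ring
lemma dt_dbc (b c d : ℝ × ℝ) : dt d b c = dt b c d := by unfold dt; ring
lemma dt_cda (a c d : ℝ × ℝ) : dt c d a = dt a c d := by unfold dt; ring
lemma dt_cdb (b c d : ℝ × ℝ) : dt c d b = dt b c d := by unfold dt; ring
lemma dt_bda (a b d : ℝ × ℝ) : dt b d a = dt a b d := by unfold dt; ring
lemma dt_bca (a b c : ℝ × ℝ) : dt b c a = dt a b c := by unfold dt; ring
lemma dt_bdc (b c d : ℝ × ℝ) : dt b d c = - dt b c d := by unfold dt; ring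

lemma key {A B C D : ℝ} (h1 : A*C > 0) (h2 : B*D > 0) (h3 : A*B < 0)
    (hsyz : A - B + C - D = 0) : False := by
  rcases mul_pos_iff.mp h1 with ⟨hA, hC⟩ | ⟨hA, hC⟩ <;>
    rcases mul_pos_iff.mp h2 with ⟨hB, hD⟩ | ⟨hB, hD⟩ <;>
    rcases mul_neg_iff.mp h3 with ⟨h, h'⟩ | ⟨h, h'⟩ <;> linarith

lemma syzygy (a b c d : ℝ × ℝ) : dt b c d - dt a c d + dt a b d - dt a b c = 0 := by unfold dt; ring
lemma cramer1 (a b c d : ℝ × ℝ) :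
    dt a b c * d.1 = dt b c d * a.1 - dt a c d * b.1 + dt a b d * c.1 := by unfold dt; ring
lemma cramer2 (a b c d : ℝ × ℝ) :
    dt a b c * d.2 = dt b c d * a.2 - dt a c d * b.2 + dt a b d * c.2 := by unfold dt; ring

lemma dt_combo3a (a b c : ℝ × ℝ) {α β γ : ℝ} (h : α + β + γ = 1) :
    dt a b (α • a + β • b + γ • c) = γ * dt a b c := by
  have hs : α = 1 - β - γ := by linarith
  subst hs; simp [dt, Prod.smul_def, smul_eq_mul]; ring
lemma dt_combo3b (a b c : ℝ × ℝ) {α β γ : ℝ} (h : α + β + γ = 1) :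
    dt b c (α • a + β • b + γ • c) = α * dt a b c := by
  have hs : α = 1 - β - γ := by linarith
  subst hs; simp [dt, Prod.smul_def, smul_eq_mul]; ring
lemma dt_combo3c (a b c : ℝ × ℝ) {α β γ : ℝ} (h : α + β + γ = 1) :
    dt a c (α • a + β • b + γ • c) = - β * dt a b c := by
  have hs : α = 1 - β - γ := by linarith
  subst hs; simp [dt, Prod.smul_def, smul_eq_mul]; ring

lemma inside_of_signs {a b c d : ℝ × ℝ} (hD : dt a b c ≠ 0)
    (h1 : dt b c d * dt a b c > 0) (h2 : dt a c d * dt a b c < 0)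
    (h3 : dt a b d * dt a b c > 0) : d ∈ convexHull ℝ ({a, b, c} : Set (ℝ × ℝ)) := by
  have hD2 : (0:ℝ) < dt a b c ^ 2 := by positivity
  have hα : 0 < dt b c d / dt a b c := by
    rw [show dt b c d / dt a b c = dt b c d * dt a b c / dt a b c ^ 2 by field_simp]
    positivity
  have hβ : 0 < -dt a c d / dt a b c := by
    rw [show -dt a c d / dt a b c = -(dt a c d * dt a b c) / dt a b c ^ 2 by field_simp]
    have h2' : 0 < -(dt a c d * dt a b c) := by linarith
    positivity
  have hγ : 0 < dt a b d / dt a b c := by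
    rw [show dt a b d / dt a b c = dt a b d * dt a b c / dt a b c ^ 2 by field_simp]
    positivity
  have hsum : dt b c d / dt a b c + -dt a c d / dt a b c + dt a b d / dt a b c = 1 := by
    have := syzygy a b c d
    field_simp
    linarith
  have hd : d = (dt b c d / dt a b c) • a + (-dt a c d / dt a b c) • b
      + (dt a b d / dt a b c) • c := by
    ext
    · simp only [Prod.fst_add, Prod.smul_fst, smul_eq_mul]
      field_simp
      linear_combination cramer1 a b c d
    · simp only [Prod.snd_add, Prod.smul_snd, smul_eq_mul]
      field_simp
      linear_combination cramer2 a b c d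
  rw [hd]
  exact combo_mem_triple hα.le hβ.le hγ.le hsum

lemma no_cross_of_inside {a b c d : ℝ × ℝ}
    (hA : dt b c d ≠ 0) (hB : dt a c d ≠ 0) (hC : dt a b d ≠ 0) (hD : dt a b c ≠ 0)
    (hins : d ∈ convexHull ℝ ({a, b, c} : Set (ℝ × ℝ))) :
    ¬(openSegment ℝ a b ∩ openSegment ℝ c d).Nonempty ∧
    ¬(openSegment ℝ a c ∩ openSegment ℝ b d).Nonempty ∧
    ¬(openSegment ℝ a d ∩ openSegment ℝ b c).Nonempty := by
  obtain ⟨α, β, γ, hα, hβ, hγ, hsum, hd⟩ := exists_combo_of_mem_triple hins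
  have E1 : dt a b d = γ * dt a b c := by rw [hd]; exact dt_combo3a a b c hsum
  have E2 : dt b c d = α * dt a b c := by rw [hd]; exact dt_combo3b a b c hsum
  have E3 : dt a c d = - β * dt a b c := by rw [hd]; exact dt_combo3c a b c hsum
  have hD2 : dt a c b ≠ 0 := by rw [dt_acb]; exact neg_ne_zero.mpr hD
  have hA2 : dt c b d ≠ 0 := by rw [dt_cbd]; exact neg_ne_zero.mpr hA
  have hC2 : dt a d b ≠ 0 := by rw [dt_adb]; exact neg_ne_zero.mpr hC
  have hB2 : dt a d c ≠ 0 := by rw [dt_adc]; exact neg_ne_zero.mpr hB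
  have hA3 : dt d b c ≠ 0 := by rw [dt_dbc]; exact hA
  have hsq : (0:ℝ) ≤ dt a b c ^ 2 := sq_nonneg _
  refine ⟨?_, ?_, ?_⟩
  · intro hne
    have := ((@cross_iff a b c d hD hC hB hA).mp hne).1
    rw [E1] at this; nlinarith
  · intro hne
    have := ((@cross_iff a c b d hD2 hB hC hA2).mp hne).1
    rw [dt_acb a b c, E3] at this; nlinarith
  · intro hne
    have := ((@cross_iff a d b c hC2 hB2 hD hA3).mp hne).2
    rw [dt_dbc b c d, E2] at this; nlinarith

lemma cross_exists_of_not_inside {a b c d : ℝ × ℝ}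
    (hA : dt b c d ≠ 0) (hB : dt a c d ≠ 0) (hC : dt a b d ≠ 0) (hD : dt a b c ≠ 0)
    (hna : a ∉ convexHull ℝ ({b, c, d} : Set (ℝ × ℝ)))
    (hnb : b ∉ convexHull ℝ ({a, c, d} : Set (ℝ × ℝ)))
    (hnc : c ∉ convexHull ℝ ({a, b, d} : Set (ℝ × ℝ)))
    (hnd : d ∉ convexHull ℝ ({a, b, c} : Set (ℝ × ℝ))) :
    (openSegment ℝ a b ∩ openSegment ℝ c d).Nonempty ∨
    (openSegment ℝ a c ∩ openSegment ℝ b d).Nonempty ∨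
    (openSegment ℝ a d ∩ openSegment ℝ b c).Nonempty := by
  have hD2 : dt a c b ≠ 0 := by rw [dt_acb]; exact neg_ne_zero.mpr hD
  have hA2 : dt c b d ≠ 0 := by rw [dt_cbd]; exact neg_ne_zero.mpr hA
  have hC2 : dt a d b ≠ 0 := by rw [dt_adb]; exact neg_ne_zero.mpr hC
  have hB2 : dt a d c ≠ 0 := by rw [dt_adc]; exact neg_ne_zero.mpr hB
  have hA3 : dt d b c ≠ 0 := by rw [dt_dbc]; exact hA
  have hsyz := syzygy a b c d
  have insa : dt a c d * dt b c d > 0 → dt a b d * dt b c d < 0 → dt a b c * dt b c d > 0 → False := by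
    intro k1 k2 k3
    refine hna (inside_of_signs hA ?_ ?_ ?_)
    · rw [dt_cda a c d]; exact k1
    · rw [dt_bda a b d]; exact k2
    · rw [dt_bca a b c]; exact k3
  have insb : dt b c d * dt a c d > 0 → dt a b d * dt a c d > 0 → dt a b c * dt a c d < 0 → False := by
    intro k1 k2 k3
    refine hnb (inside_of_signs hB ?_ ?_ ?_)
    · rw [dt_cdb b c d]; exact k1
    · rw [dt_adb a b d]; nlinarith
    · rw [dt_acb a b c]; nlinarith
  have insc : dt b c d * dt a b d < 0 → dt a c d * dt a b d > 0 → dt a b c * dt a b d > 0 → False := by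
    intro k1 k2 k3
    refine hnc (inside_of_signs hC ?_ ?_ ?_)
    · rw [dt_bdc b c d]; nlinarith
    · rw [dt_adc a c d]; nlinarith
    · exact k3
  have insd : dt b c d * dt a b c > 0 → dt a c d * dt a b c < 0 → dt a b d * dt a b c > 0 → False :=
    fun k1 k2 k3 => hnd (inside_of_signs hD k1 k2 k3)
  have cr1 : dt a b c * dt a b d < 0 → dt a c d * dt b c d < 0 →
      (openSegment ℝ a b ∩ openSegment ℝ c d).Nonempty :=
    fun k1 k2 => (@cross_iff a b c d hD hC hB hA).mpr ⟨k1, k2⟩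
  have cr2 : dt a b c * dt a c d > 0 → dt a b d * dt b c d > 0 →
      (openSegment ℝ a c ∩ openSegment ℝ b d).Nonempty := by
    intro k1 k2
    refine (@cross_iff a c b d hD2 hB hC hA2).mpr ⟨?_, ?_⟩
    · rw [dt_acb a b c]; nlinarith
    · rw [dt_cbd b c d]; nlinarith
  have cr3 : dt a b d * dt a c d < 0 → dt a b c * dt b c d < 0 →
      (openSegment ℝ a d ∩ openSegment ℝ b c).Nonempty := by
    intro k1 k2
    refine (@cross_iff a d b c hC2 hB2 hD hA3).mpr ⟨?_, ?_⟩
    · rw [dt_adb a b d, dt_adc a c d]; nlinarith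
    · rw [dt_dbc b c d]; exact k2
  rcases hA.lt_or_gt with hA' | hA' <;> rcases hB.lt_or_gt with hB' | hB' <;>
    rcases hC.lt_or_gt with hC' | hC' <;> rcases hD.lt_or_gt with hD' | hD'
  · exact Or.inr (Or.inl (cr2 (by nlinarith) (by nlinarith)))
  · exact absurd (insb (by nlinarith) (by nlinarith) (by nlinarith)) (fun h => h)
  · exact absurd (insa (by nlinarith) (by nlinarith) (by nlinarith)) (fun h => h)
  · exact Or.inr (Or.inr (cr3 (by nlinarith) (by nlinarith)))
  · exact absurd (insd (by nlinarith) (by nlinarith) (by nlinarith)) (fun h => h)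
  · exact absurd (by linarith : (0:ℝ) < 0) (lt_irrefl 0)
  · exact Or.inl (cr1 (by nlinarith) (by nlinarith))
  · exact absurd (insc (by nlinarith) (by nlinarith) (by nlinarith)) (fun h => h)
  · exact absurd (insc (by nlinarith) (by nlinarith) (by nlinarith)) (fun h => h)
  · exact Or.inl (cr1 (by nlinarith) (by nlinarith))
  · exact absurd (by linarith : (0:ℝ) < 0) (lt_irrefl 0)
  · exact absurd (insd (by nlinarith) (by nlinarith) (by nlinarith)) (fun h => h)
  · exact Or.inr (Or.inr (cr3 (by nlinarith) (by nlinarith)))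
  · exact absurd (insa (by nlinarith) (by nlinarith) (by nlinarith)) (fun h => h)
  · exact absurd (insb (by nlinarith) (by nlinarith) (by nlinarith)) (fun h => h)
  · exact Or.inr (Or.inl (cr2 (by nlinarith) (by nlinarith)))



lemma L2 {x : ℝ × ℝ} {s : Set (ℝ × ℝ)} (hx : x ∈ Set.extremePoints ℝ (convexHull ℝ s)) :
    x ∉ convexHull ℝ (s \ {x}) := by
  intro hmem
  have hsub : convexHull ℝ (s \ {x}) ⊆ convexHull ℝ s := convexHull_mono Set.diff_subset
  rw [mem_extremePoints] at hx
  have hx' : x ∈ Set.extremePoints ℝ (convexHull ℝ (s \ {x})) := by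
    rw [mem_extremePoints]
    exact ⟨hmem, fun y hy z hz h => hx.2 y (hsub hy) z (hsub hz) h⟩
  exact (extremePoints_convexHull_subset hx').2 rfl

lemma L1 {x : ℝ × ℝ} {s : Set (ℝ × ℝ)} (hxs : x ∈ s)
    (hx : x ∉ convexHull ℝ (s \ {x})) : x ∈ Set.extremePoints ℝ (convexHull ℝ s) := by
  rw [mem_extremePoints]
  refine ⟨subset_convexHull ℝ s hxs, ?_⟩
  intro y hy z hz hseg
  by_cases hempty : (s \ {x}).Nonempty
  · have hins : s = insert x (s \ {x}) := by
      ext w; simp only [Set.mem_insert_iff, Set.mem_diff, Set.mem_singleton_iff]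
      constructor
      · intro hw
        by_cases hwx : w = x
        · exact Or.inl hwx
        · exact Or.inr ⟨hw, hwx⟩
      · rintro (rfl | ⟨hw, -⟩)
        · exact hxs
        · exact hw
    rw [hins, convexHull_insert hempty, mem_convexJoin] at hy hz
    obtain ⟨x₁, hx₁, y', hy', hyseg⟩ := hy
    obtain ⟨x₂, hx₂, z', hz', hzseg⟩ := hz
    rw [Set.mem_singleton_iff] at hx₁ hx₂
    rw [hx₁] at hyseg
    rw [hx₂] at hzseg
    obtain ⟨u₁, v₁, hu₁, hv₁, huv₁, hyeq⟩ := hyseg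
    obtain ⟨u₂, v₂, hu₂, hv₂, huv₂, hzeq⟩ := hzseg
    obtain ⟨t₁, t₂, ht₁, ht₂, ht, hxeq⟩ := hseg
    have E1f : t₁ * y.1 + t₂ * z.1 = x.1 := by
      have := congrArg Prod.fst hxeq; simpa using this
    have E1s : t₁ * y.2 + t₂ * z.2 = x.2 := by
      have := congrArg Prod.snd hxeq; simpa using this
    have E2f : u₁ * x.1 + v₁ * y'.1 = y.1 := by
      have := congrArg Prod.fst hyeq; simpa using this
    have E2s : u₁ * x.2 + v₁ * y'.2 = y.2 := by
      have := congrArg Prod.snd hyeq; simpa using this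
    have E3f : u₂ * x.1 + v₂ * z'.1 = z.1 := by
      have := congrArg Prod.fst hzeq; simpa using this
    have E3s : u₂ * x.2 + v₂ * z'.2 = z.2 := by
      have := congrArg Prod.snd hzeq; simpa using this
    by_cases hc : t₁ * v₁ + t₂ * v₂ = 0
    · have hv₁0 : v₁ = 0 := by nlinarith
      have hv₂0 : v₂ = 0 := by nlinarith
      have hu₁1 : u₁ = 1 := by linarith
      have hu₂1 : u₂ = 1 := by linarith
      constructor
      · rw [← hyeq, hv₁0, hu₁1]; simp
      · rw [← hzeq, hv₂0, hu₂1]; simp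
    · exfalso
      apply hx
      have hpos : 0 < t₁ * v₁ + t₂ * v₂ :=
        lt_of_le_of_ne (by positivity) (Ne.symm hc)
      have hkey1 : x.1 * (t₁*v₁ + t₂*v₂) = (t₁*v₁) * y'.1 + (t₂*v₂) * z'.1 := by
        linear_combination (-1 : ℝ) * E1f - t₁*E2f - t₂*E3f + x.1*t₁*huv₁ + x.1*t₂*huv₂ + x.1*ht
      have hkey2 : x.2 * (t₁*v₁ + t₂*v₂) = (t₁*v₁) * y'.2 + (t₂*v₂) * z'.2 := by
        linear_combination (-1 : ℝ) * E1s - t₁*E2s - t₂*E3s + x.2*t₁*huv₁ + x.2*t₂*huv₂ + x.2*ht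
      have hxval : x = ((t₁*v₁)/(t₁*v₁+t₂*v₂)) • y' + ((t₂*v₂)/(t₁*v₁+t₂*v₂)) • z' := by
        ext
        · simp only [Prod.fst_add, Prod.smul_fst, smul_eq_mul]
          field_simp
          linear_combination hkey1
        · simp only [Prod.snd_add, Prod.smul_snd, smul_eq_mul]
          field_simp
          linear_combination hkey2
      have hsegsub := (convex_convexHull ℝ (s \ {x})).segment_subset hy' hz'
      apply hsegsub
      refine ⟨(t₁*v₁)/(t₁*v₁+t₂*v₂), (t₂*v₂)/(t₁*v₁+t₂*v₂), ?_, ?_, ?_, hxval.symm⟩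
      · positivity
      · positivity
      · field_simp
  · rw [Set.not_nonempty_iff_eq_empty] at hempty
    have hsx : s = {x} := by
      ext w
      constructor
      · intro hw
        by_contra hwx
        exact absurd (Set.mem_diff_of_mem hw hwx) (by rw [hempty]; exact Set.notMem_empty w)
      · rintro rfl; exact hxs
    rw [hsx, convexHull_singleton, Set.mem_singleton_iff] at hy hz
    exact ⟨hy, hz⟩

lemma pairing_cases {V : Type*} {i j k l i' j' k' l' : V}
    (hij : i ≠ j) (hik : i ≠ k) (hil : i ≠ l) (hjk : j ≠ k) (hjl : j ≠ l) (hkl : k ≠ l)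
    (h1 : i' = i ∨ i' = j ∨ i' = k ∨ i' = l)
    (h2 : j' = i ∨ j' = j ∨ j' = k ∨ j' = l)
    (h3 : k' = i ∨ k' = j ∨ k' = k ∨ k' = l)
    (h4 : l' = i ∨ l' = j ∨ l' = k ∨ l' = l)
    (hij' : i' ≠ j') (hik' : i' ≠ k') (hil' : i' ≠ l') (hjk' : j' ≠ k') (hjl' : j' ≠ l')
    (hkl' : k' ≠ l') :
    s(s(i',j'),s(k',l')) = s(s(i,j),s(k,l)) ∨
    s(s(i',j'),s(k',l')) = s(s(i,k),s(j,l)) ∨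
    s(s(i',j'),s(k',l')) = s(s(i,l),s(j,k)) := by
  rcases h1 with rfl|rfl|rfl|rfl <;> rcases h2 with rfl|rfl|rfl|rfl <;>
    rcases h3 with rfl|rfl|rfl|rfl <;> rcases h4 with rfl|rfl|rfl|rfl <;>
    simp_all [Sym2.eq_iff] <;> tauto

variable {n : ℕ} {p : Fin n → ℝ × ℝ}

def endpoints {V : Type*} [DecidableEq V] : Sym2 V → Finset V :=
  Sym2.lift ⟨fun x y => {x, y}, fun x y => Finset.pair_comm x y⟩

def quad {V : Type*} [DecidableEq V] : Sym2 (Sym2 V) → Finset V :=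
  Sym2.lift ⟨fun e f => endpoints e ∪ endpoints f, fun e f => Finset.union_comm _ _⟩

lemma quad_mk {V : Type*} [DecidableEq V] (i j k l : V) :
    quad s(s(i,j),s(k,l)) = {i, j, k, l} := by
  show ({i, j} ∪ {k, l} : Finset V) = {i, j, k, l}
  ext x
  simp only [Finset.mem_union, Finset.mem_insert, Finset.mem_singleton]
  tauto

def CrSet (n : ℕ) (p : Fin n → ℝ × ℝ) : Set (Sym2 (Sym2 (Fin n))) :=
  {P : Sym2 (Sym2 (Fin n)) | ∃ e f : Sym2 (Fin n),
    P = s(e, f) ∧ e ∈ (⊤ : SimpleGraph (Fin n)).edgeSet ∧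
    f ∈ (⊤ : SimpleGraph (Fin n)).edgeSet ∧ SLCross p e f}

lemma memC_iff {P : Sym2 (Sym2 (Fin n))} :
    P ∈ CrSet n p ↔ ∃ i j k l : Fin n, i ≠ j ∧ i ≠ k ∧ i ≠ l ∧ j ≠ k ∧ j ≠ l ∧ k ≠ l ∧
      P = s(s(i,j),s(k,l)) ∧
      (openSegment ℝ (p i) (p j) ∩ openSegment ℝ (p k) (p l)).Nonempty := by
  constructor
  · rintro ⟨e, f, rfl, he, hf, hind, a, b, c, d, rfl, rfl, hseg⟩
    rw [SimpleGraph.mem_edgeSet, SimpleGraph.top_adj] at he hf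
    have hac : a ≠ c := fun h => hind a (by simp) (by rw [h]; simp)
    have had : a ≠ d := fun h => hind a (by simp) (by rw [h]; simp)
    have hbc : b ≠ c := fun h => hind b (by simp) (by rw [h]; simp)
    have hbd : b ≠ d := fun h => hind b (by simp) (by rw [h]; simp)
    exact ⟨a, b, c, d, he, hac, had, hbc, hbd, hf, rfl, hseg⟩
  · rintro ⟨i, j, k, l, hij, hik, hil, hjk, hjl, hkl, rfl, hseg⟩
    refine ⟨s(i,j), s(k,l), rfl, ?_, ?_, ?_, i, j, k, l, rfl, rfl, hseg⟩
    · rw [SimpleGraph.mem_edgeSet, SimpleGraph.top_adj]; exact hij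
    · rw [SimpleGraph.mem_edgeSet, SimpleGraph.top_adj]; exact hkl
    · intro x hx hx'
      rw [Sym2.mem_iff] at hx hx'
      rcases hx with rfl | rfl <;> rcases hx' with h | h <;> simp_all

lemma mem_openSegment_symm {A B : ℝ × ℝ} {pt : ℝ × ℝ} (h : pt ∈ openSegment ℝ A B) :
    pt ∈ openSegment ℝ B A := by rwa [openSegment_symm]

lemma crossC {x y z w : Fin n} (h : s(s(x,y),s(z,w)) ∈ CrSet n p) :
    (openSegment ℝ (p x) (p y) ∩ openSegment ℝ (p z) (p w)).Nonempty := by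
  obtain ⟨i, j, k, l, -, -, -, -, -, -, hP, hseg⟩ := memC_iff.mp h
  obtain ⟨pt, h1, h2⟩ := hseg
  rcases Sym2.eq_iff.mp hP with ⟨ha, hb⟩ | ⟨ha, hb⟩ <;>
    rcases Sym2.eq_iff.mp ha with ⟨rfl, rfl⟩ | ⟨rfl, rfl⟩ <;>
    rcases Sym2.eq_iff.mp hb with ⟨rfl, rfl⟩ | ⟨rfl, rfl⟩ <;>
    (refine ⟨pt, ?_, ?_⟩ <;>
      first
        | exact h1
        | exact h2
        | exact mem_openSegment_symm h1
        | exact mem_openSegment_symm h2)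

lemma card4 {i j k l : Fin n} (hij : i ≠ j) (hik : i ≠ k) (hil : i ≠ l)
    (hjk : j ≠ k) (hjl : j ≠ l) (hkl : k ≠ l) :
    ({i, j, k, l} : Finset (Fin n)).card = 4 := by
  rw [Finset.card_insert_of_notMem (by simp [hij, hik, hil]),
    Finset.card_insert_of_notMem (by simp [hjk, hjl]),
    Finset.card_insert_of_notMem (by simp [hkl]), Finset.card_singleton]



variable {a b c d : ℝ × ℝ}

lemma cross12 (hA : dt b c d ≠ 0) (hB : dt a c d ≠ 0) (hC : dt a b d ≠ 0) (hD : dt a b c ≠ 0)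
    (h1 : (openSegment ℝ a b ∩ openSegment ℝ c d).Nonempty)
    (h2 : (openSegment ℝ a c ∩ openSegment ℝ b d).Nonempty) : False := by
  have hD2 : dt a c b ≠ 0 := by rw [dt_acb]; exact neg_ne_zero.mpr hD
  have hA2 : dt c b d ≠ 0 := by rw [dt_cbd]; exact neg_ne_zero.mpr hA
  obtain ⟨k1a, k1b⟩ := (@cross_iff a b c d hD hC hB hA).mp h1
  obtain ⟨k2a, k2b⟩ := (@cross_iff a c b d hD2 hB hC hA2).mp h2
  rw [dt_acb a b c] at k2a
  rw [dt_cbd b c d] at k2b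
  exact @key (dt b c d) (dt a c d) (dt a b d) (dt a b c)
    (by nlinarith) (by nlinarith) (by nlinarith) (syzygy a b c d)

lemma cross13 (hA : dt b c d ≠ 0) (hB : dt a c d ≠ 0) (hC : dt a b d ≠ 0) (hD : dt a b c ≠ 0)
    (h1 : (openSegment ℝ a b ∩ openSegment ℝ c d).Nonempty)
    (h3 : (openSegment ℝ a d ∩ openSegment ℝ b c).Nonempty) : False := by
  have hC2 : dt a d b ≠ 0 := by rw [dt_adb]; exact neg_ne_zero.mpr hC
  have hB2 : dt a d c ≠ 0 := by rw [dt_adc]; exact neg_ne_zero.mpr hB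
  have hA3 : dt d b c ≠ 0 := by rw [dt_dbc]; exact hA
  obtain ⟨k1a, k1b⟩ := (@cross_iff a b c d hD hC hB hA).mp h1
  obtain ⟨k3a, k3b⟩ := (@cross_iff a d b c hC2 hB2 hD hA3).mp h3
  rw [dt_adb a b d, dt_adc a c d] at k3a
  rw [dt_dbc b c d] at k3b
  have hBsq : (0:ℝ) < dt a c d ^ 2 := by positivity
  have hCsq : (0:ℝ) < dt a b d ^ 2 := by positivity
  have hAC : dt b c d * dt a b d > 0 := by nlinarith [mul_pos_of_neg_of_neg k1b k3a]
  have hBD : dt a c d * dt a b c > 0 := by nlinarith [mul_pos_of_neg_of_neg k1a k3a]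
  exact @key (dt b c d) (dt a c d) (dt a b d) (dt a b c)
    hAC hBD (by nlinarith) (syzygy a b c d)

lemma cross23 (hA : dt b c d ≠ 0) (hB : dt a c d ≠ 0) (hC : dt a b d ≠ 0) (hD : dt a b c ≠ 0)
    (h2 : (openSegment ℝ a c ∩ openSegment ℝ b d).Nonempty)
    (h3 : (openSegment ℝ a d ∩ openSegment ℝ b c).Nonempty) : False := by
  have hD2 : dt a c b ≠ 0 := by rw [dt_acb]; exact neg_ne_zero.mpr hD
  have hA2 : dt c b d ≠ 0 := by rw [dt_cbd]; exact neg_ne_zero.mpr hA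
  have hC2 : dt a d b ≠ 0 := by rw [dt_adb]; exact neg_ne_zero.mpr hC
  have hB2 : dt a d c ≠ 0 := by rw [dt_adc]; exact neg_ne_zero.mpr hB
  have hA3 : dt d b c ≠ 0 := by rw [dt_dbc]; exact hA
  obtain ⟨k2a, k2b⟩ := (@cross_iff a c b d hD2 hB hC hA2).mp h2
  obtain ⟨k3a, k3b⟩ := (@cross_iff a d b c hC2 hB2 hD hA3).mp h3
  rw [dt_acb a b c] at k2a
  rw [dt_cbd b c d] at k2b
  rw [dt_adb a b d, dt_adc a c d] at k3a
  rw [dt_dbc b c d] at k3b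
  have hCsq : (0:ℝ) < dt a b d ^ 2 := by positivity
  exact @key (dt b c d) (dt a c d) (dt a b d) (dt a b c)
    (by nlinarith) (by nlinarith) (by nlinarith [mul_pos_of_neg_of_neg k3b k2b]) (syzygy a b c d)

end SLMain



/-- For `n` distinct points in the plane with no three collinear, viewed as a straight-line
drawing of `K_n`, the number of crossings is at most `C(n,4)`, with equality if and only if
the points are in convex position. -/
theorem slCr_completeGraph_le_and_eq_iff_convexPos (n : ℕ) (p : Fin n → ℝ × ℝ)
    (hinj : Function.Injective p)
    (hgen : ∀ i j k : Fin n, i ≠ j → i ≠ k → j ≠ k →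
      ¬ Collinear ℝ ({p i, p j, p k} : Set (ℝ × ℝ))) :
    slCr (⊤ : SimpleGraph (Fin n)) p ≤ n.choose 4 ∧
    (slCr (⊤ : SimpleGraph (Fin n)) p = n.choose 4 ↔
      ∀ i : Fin n, p i ∈ Set.extremePoints ℝ (convexHull ℝ (Set.range p))) := by
  classical
  have hslCr : slCr (⊤ : SimpleGraph (Fin n)) p = (SLMain.CrSet n p).ncard := rfl
  set C := SLMain.CrSet n p with hCdef
  set T : Set (Finset (Fin n)) := {s : Finset (Fin n) | s.card = 4} with hTdef
  have hTfin : T.Finite := Set.toFinite _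
  have hCfin : C.Finite := Set.toFinite _
  have hTcard : T.ncard = n.choose 4 := by
    have hTeq : T = ↑(Finset.powersetCard 4 (Finset.univ : Finset (Fin n))) := by
      ext t
      simp [hTdef, Finset.mem_powersetCard, Finset.subset_univ]
    rw [hTeq, Set.ncard_coe_finset, Finset.card_powersetCard, Finset.card_univ,
      Fintype.card_fin]
  have hdt : ∀ i j k : Fin n, i ≠ j → i ≠ k → j ≠ k → SLMain.dt (p i) (p j) (p k) ≠ 0 := by
    intro i j k hij hik hjk h0
    exact hgen i j k hij hik hjk (SLMain.collinear_of_dt_eq_zero h0)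
  have hpne : ∀ {i j : Fin n}, i ≠ j → p i ≠ p j := fun h he => h (hinj he)
  have hmapsto : ∀ P ∈ C, SLMain.quad P ∈ T := by
    intro P hP
    obtain ⟨i, j, k, l, hij, hik, hil, hjk, hjl, hkl, rfl, -⟩ := SLMain.memC_iff.mp hP
    rw [SLMain.quad_mk]
    show ({i, j, k, l} : Finset (Fin n)).card = 4
    exact SLMain.card4 hij hik hil hjk hjl hkl
  have hinjOn : Set.InjOn SLMain.quad C := by
    intro P hP Q hQ hPQ
    obtain ⟨i, j, k, l, hij, hik, hil, hjk, hjl, hkl, hPrep, hseg⟩ := SLMain.memC_iff.mp hP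
    obtain ⟨i', j', k', l', hij', hik', hil', hjk', hjl', hkl', hQrep, hseg'⟩ :=
      SLMain.memC_iff.mp hQ
    rw [hPrep, hQrep, SLMain.quad_mk, SLMain.quad_mk] at hPQ
    have hmem : ∀ x : Fin n, x ∈ ({i', j', k', l'} : Finset (Fin n)) →
        (x = i ∨ x = j ∨ x = k ∨ x = l) := by
      intro x hx
      rw [← hPQ] at hx
      simpa using hx
    have h1 := hmem i' (by simp)
    have h2 := hmem j' (by simp)
    have h3 := hmem k' (by simp)
    have h4 := hmem l' (by simp)
    rcases SLMain.pairing_cases hij hik hil hjk hjl hkl h1 h2 h3 h4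
        hij' hik' hil' hjk' hjl' hkl' with he | he | he
    · rw [hPrep, hQrep, he]
    · exfalso
      have hcr2 : (openSegment ℝ (p i) (p k) ∩ openSegment ℝ (p j) (p l)).Nonempty := by
        refine SLMain.crossC (p := p) ?_
        rw [← he, ← hQrep]
        exact hQ
      exact SLMain.cross12 (hdt j k l hjk hjl hkl) (hdt i k l hik hil hkl)
        (hdt i j l hij hil hjl) (hdt i j k hij hik hjk) hseg hcr2
    · exfalso
      have hcr3 : (openSegment ℝ (p i) (p l) ∩ openSegment ℝ (p j) (p k)).Nonempty := by
        refine SLMain.crossC (p := p) ?_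
        rw [← he, ← hQrep]
        exact hQ
      exact SLMain.cross13 (hdt j k l hjk hjl hkl) (hdt i k l hik hil hkl)
        (hdt i j l hij hil hjl) (hdt i j k hij hik hjk) hseg hcr3
  have himg : SLMain.quad '' C ⊆ T := by
    rintro _ ⟨P, hP, rfl⟩
    exact hmapsto P hP
  have hbound : C.ncard ≤ n.choose 4 := by
    rw [← hTcard, ← Set.ncard_image_of_injOn hinjOn]
    exact Set.ncard_le_ncard himg hTfin
  -- if p m is inside the triangle of three others, the 4-set is not covered
  have hcontra : ∀ j k l m : Fin n, j ≠ k → j ≠ l → j ≠ m → k ≠ l → k ≠ m → l ≠ m →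
      p m ∈ convexHull ℝ ({p j, p k, p l} : Set (ℝ × ℝ)) →
      ({j, k, l, m} : Finset (Fin n)) ∉ SLMain.quad '' C := by
    intro j k l m hjk hjl hjm hkl hkm hlm hmem himgmem
    obtain ⟨P, hP, hquad⟩ := himgmem
    obtain ⟨i₀, j₀, k₀, l₀, h01, h02, h03, h04, h05, h06, hPrep, hseg₀⟩ := SLMain.memC_iff.mp hP
    rw [hPrep, SLMain.quad_mk] at hquad
    have hmem' : ∀ x : Fin n, x ∈ ({i₀, j₀, k₀, l₀} : Finset (Fin n)) →
        (x = j ∨ x = k ∨ x = l ∨ x = m) := by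
      intro x hx
      rw [hquad] at hx
      simpa using hx
    have h1 := hmem' i₀ (by simp)
    have h2 := hmem' j₀ (by simp)
    have h3 := hmem' k₀ (by simp)
    have h4 := hmem' l₀ (by simp)
    obtain ⟨n1, n2, n3⟩ := SLMain.no_cross_of_inside (hdt k l m hkl hkm hlm)
      (hdt j l m hjl hjm hlm) (hdt j k m hjk hjm hkm) (hdt j k l hjk hjl hkl) hmem
    rcases SLMain.pairing_cases hjk hjl hjm hkl hkm hlm h1 h2 h3 h4
        h01 h02 h03 h04 h05 h06 with he | he | he
    · exact n1 (SLMain.crossC (p := p) (by rw [← he, ← hPrep]; exact hP))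
    · exact n2 (SLMain.crossC (p := p) (by rw [← he, ← hPrep]; exact hP))
    · exact n3 (SLMain.crossC (p := p) (by rw [← he, ← hPrep]; exact hP))
  have hsurj : (∀ i : Fin n, p i ∈ Set.extremePoints ℝ (convexHull ℝ (Set.range p))) →
      T ⊆ SLMain.quad '' C := by
    intro hext t ht
    have htc : t.card = 4 := ht
    obtain ⟨i, hi⟩ := Finset.card_pos.mp (show 0 < t.card by omega)
    have herase : (t.erase i).card = 3 := by
      rw [Finset.card_erase_of_mem hi, htc]
    obtain ⟨j, k, l, hjk, hjl, hkl, ht'⟩ := Finset.card_eq_three.mp herase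
    have hteq : t = {i, j, k, l} := by
      rw [← Finset.insert_erase hi, ht']
    have hij : i ≠ j := fun h => (Finset.ne_of_mem_erase (ht' ▸ (by simp : j ∈ ({j,k,l} : Finset (Fin n))))) h.symm
    have hik : i ≠ k := fun h => (Finset.ne_of_mem_erase (ht' ▸ (by simp : k ∈ ({j,k,l} : Finset (Fin n))))) h.symm
    have hil : i ≠ l := fun h => (Finset.ne_of_mem_erase (ht' ▸ (by simp : l ∈ ({j,k,l} : Finset (Fin n))))) h.symm
    have hnotin : ∀ x y z w : Fin n, x ≠ y → x ≠ z → x ≠ w →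
        p x ∉ convexHull ℝ ({p y, p z, p w} : Set (ℝ × ℝ)) := by
      intro x y z w hxy hxz hxw hmem
      refine SLMain.L2 (hext x) (convexHull_mono ?_ hmem)
      rintro q (rfl | rfl | rfl)
      · exact ⟨Set.mem_range_self y, by simp [(hpne hxy.symm : p y ≠ p x)]⟩
      · exact ⟨Set.mem_range_self z, by simp [(hpne hxz.symm : p z ≠ p x)]⟩
      · exact ⟨Set.mem_range_self w, by simp [(hpne hxw.symm : p w ≠ p x)]⟩
    rcases SLMain.cross_exists_of_not_inside (hdt j k l hjk hjl hkl)
        (hdt i k l hik hil hkl) (hdt i j l hij hil hjl) (hdt i j k hij hik hjk)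
        (hnotin i j k l hij hik hil) (hnotin j i k l hij.symm hjk hjl)
        (hnotin k i j l hik.symm hjk.symm hkl) (hnotin l i j k hil.symm hjl.symm hkl.symm)
        with hcr | hcr | hcr
    · refine ⟨s(s(i,j),s(k,l)), SLMain.memC_iff.mpr
        ⟨i, j, k, l, hij, hik, hil, hjk, hjl, hkl, rfl, hcr⟩, ?_⟩
      rw [SLMain.quad_mk, hteq]
    · refine ⟨s(s(i,k),s(j,l)), SLMain.memC_iff.mpr
        ⟨i, k, j, l, hik, hij, hil, hjk.symm, hkl, hjl, rfl, hcr⟩, ?_⟩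
      rw [SLMain.quad_mk, hteq]
      ext x; simp; tauto
    · refine ⟨s(s(i,l),s(j,k)), SLMain.memC_iff.mpr
        ⟨i, l, j, k, hil, hij, hik, hjl.symm, hkl.symm, hjk, rfl, hcr⟩, ?_⟩
      rw [SLMain.quad_mk, hteq]
      ext x; simp; tauto
  refine ⟨by rw [hslCr]; exact hbound, ?_, ?_⟩
  · -- equality → convex position
    intro heq
    have himgeq : SLMain.quad '' C = T := by
      refine Set.eq_of_subset_of_ncard_le himg ?_ hTfin
      rw [Set.ncard_image_of_injOn hinjOn, hTcard]
      have hCn : C.ncard = n.choose 4 := by rw [← hslCr]; exact heq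
      exact hCn.ge
    intro m
    by_contra hnm
    have hmemhull : p m ∈ convexHull ℝ (Set.range p \ {p m}) := by
      by_contra hh
      exact hnm (SLMain.L1 (Set.mem_range_self m) hh)
    rw [convexHull_eq_union] at hmemhull
    simp only [Set.mem_iUnion] at hmemhull
    obtain ⟨t, hts, hai, hmem⟩ := hmemhull
    have hcard : t.card ≤ 3 := by
      have h1 := hai.card_le_finrank_succ
      rw [Fintype.card_coe] at h1
      have h2 : Module.finrank ℝ (vectorSpan ℝ (Set.range ((↑) : t → ℝ × ℝ))) ≤ 2 := by
        have h3 := Submodule.finrank_le (vectorSpan ℝ (Set.range ((↑) : t → ℝ × ℝ)))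
        have h4 : Module.finrank ℝ (ℝ × ℝ) = 2 := by
          simp [Module.finrank_prod]
        omega
      omega
    have hcases : t.card = 0 ∨ t.card = 1 ∨ t.card = 2 ∨ t.card = 3 := by omega
    rcases hcases with h0 | h1c | h2c | h3c
    · rw [Finset.card_eq_zero] at h0
      subst h0
      simp at hmem
    · obtain ⟨q, rfl⟩ := Finset.card_eq_one.mp h1c
      rw [Finset.coe_singleton, convexHull_singleton, Set.mem_singleton_iff] at hmem
      have hq := hts (by simp : q ∈ (↑({q} : Finset (ℝ × ℝ)) : Set (ℝ × ℝ)))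
      exact hq.2 (by rw [hmem]; exact Set.mem_singleton q)
    · obtain ⟨q, r, hqr, rfl⟩ := Finset.card_eq_two.mp h2c
      have hcoe : (↑({q, r} : Finset (ℝ × ℝ)) : Set (ℝ × ℝ)) = {q, r} := by simp
      rw [hcoe] at hmem hts
      have hq := hts (by simp : q ∈ ({q, r} : Set (ℝ × ℝ)))
      have hr := hts (by simp : r ∈ ({q, r} : Set (ℝ × ℝ)))
      obtain ⟨⟨jq, hjq⟩, hq2⟩ := hq
      obtain ⟨⟨jr, hjr⟩, hr2⟩ := hr
      have hmjq : m ≠ jq := fun h => hq2 (by rw [← hjq, ← h]; exact rfl)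
      have hmjr : m ≠ jr := fun h => hr2 (by rw [← hjr, ← h]; exact rfl)
      have hjqjr : jq ≠ jr := fun h => hqr (by rw [← hjq, ← hjr, h])
      have hspan : p m ∈ affineSpan ℝ ({q, r} : Set (ℝ × ℝ)) :=
        convexHull_subset_affineSpan _ hmem
      have hcol : Collinear ℝ ({p m, q, r} : Set (ℝ × ℝ)) :=
        collinear_insert_of_mem_affineSpan_pair hspan
      refine hgen m jq jr hmjq hmjr hjqjr ?_
      rw [hjq, hjr]
      exact hcol
    · obtain ⟨q, r, s', hqr, hqs, hrs, rfl⟩ := Finset.card_eq_three.mp h3c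
      have hcoe : (↑({q, r, s'} : Finset (ℝ × ℝ)) : Set (ℝ × ℝ)) = {q, r, s'} := by simp
      rw [hcoe] at hmem hts
      have hq := hts (by simp : q ∈ ({q, r, s'} : Set (ℝ × ℝ)))
      have hr := hts (by simp : r ∈ ({q, r, s'} : Set (ℝ × ℝ)))
      have hs := hts (by simp : s' ∈ ({q, r, s'} : Set (ℝ × ℝ)))
      obtain ⟨⟨jq, hjq⟩, hq2⟩ := hq
      obtain ⟨⟨jr, hjr⟩, hr2⟩ := hr
      obtain ⟨⟨js, hjs⟩, hs2⟩ := hs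
      have hmjq : jq ≠ m := fun h => hq2 (by rw [← hjq, h]; exact rfl)
      have hmjr : jr ≠ m := fun h => hr2 (by rw [← hjr, h]; exact rfl)
      have hmjs : js ≠ m := fun h => hs2 (by rw [← hjs, h]; exact rfl)
      have hjqjr : jq ≠ jr := fun h => hqr (by rw [← hjq, ← hjr, h])
      have hjqjs : jq ≠ js := fun h => hqs (by rw [← hjq, ← hjs, h])
      have hjrjs : jr ≠ js := fun h => hrs (by rw [← hjr, ← hjs, h])
      have hmem' : p m ∈ convexHull ℝ ({p jq, p jr, p js} : Set (ℝ × ℝ)) := by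
        rw [hjq, hjr, hjs]
        exact hmem
      refine hcontra jq jr js m hjqjr hjqjs hmjq hjrjs hmjr hmjs hmem' ?_
      rw [himgeq]
      show ({jq, jr, js, m} : Finset (Fin n)).card = 4
      exact SLMain.card4 hjqjr hjqjs hmjq hjrjs hmjr hmjs
  · -- convex position → equality
    intro hext
    rw [hslCr, ← hTcard, ← Set.ncard_image_of_injOn hinjOn,
      Set.Subset.antisymm himg (hsurj hext)]
end

section
/- Let a, b, c, d be four distinct points in ℝ² with no three of them collinear. Among the three pairings of the four points into two segments, namely {(a,b),(c,d)}, {(a,c),(b,d)}, {(a,d),(b,c)}, exactly one pairing consists of two crossing open segments if the four points are in convex position, and no pairing consists of crossing open segments otherwise. In particular, at most one of the three pairings yields a crossing. -/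
/-!
Write `d = α • a + β • b + γ • c` with `α + β + γ = 1` (barycentric coordinates with respect to
the triangle `abc`, which are ratios of orientation determinants). The segments `ab` and `cd`
cross iff `γ < 0 < α, β`, and similarly for the other two pairings; a point lies in the
triangle of the other three iff the coordinates have the matching sign pattern (`0 ≤ α, β, γ`
for `d`, `β, γ ≤ 0 < α` for `a`, …). By Krein–Milman, convex position means that no point lies
in the triangle of the other three, so the claim reduces to a sign table for `α, β, γ`.
-/

/-- The open segments joining `p` to `q` and `r` to `s` cross, i.e. have a common point. -/
def SegCross (p q r s : ℝ × ℝ) : Prop :=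
  (openSegment ℝ p q ∩ openSegment ℝ r s).Nonempty

/-- Four points are in convex position: each is an extreme point of their convex hull. -/
def FourConvexPos (a b c d : ℝ × ℝ) : Prop :=
  ∀ x ∈ ({a, b, c, d} : Set (ℝ × ℝ)),
    x ∈ Set.extremePoints ℝ (convexHull ℝ ({a, b, c, d} : Set (ℝ × ℝ)))

def orient (p q r : ℝ × ℝ) : ℝ := (q.1 - p.1) * (r.2 - p.2) - (q.2 - p.2) * (r.1 - p.1)

lemma orient_smul_add_smul_add_smul (p q x y z : ℝ × ℝ) {α β γ : ℝ} (h : α + β + γ = 1) :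
    orient p q (α • x + β • y + γ • z) =
      α * orient p q x + β * orient p q y + γ * orient p q z := by
  simp only [orient, Prod.fst_add, Prod.snd_add, Prod.smul_fst, Prod.smul_snd, smul_eq_mul]
  linear_combination ((q.1 - p.1) * p.2 - (q.2 - p.2) * p.1) * h

lemma orient_barycentric {p q r x : ℝ × ℝ} {α β γ : ℝ} (hx : x = α • p + β • q + γ • r)
    (h : α + β + γ = 1) :
    orient q r x = α * orient p q r ∧ orient r p x = β * orient p q r ∧
      orient p q x = γ * orient p q r := by
  subst hx
  refine ⟨?_, ?_, ?_⟩ <;> simp only [orient_smul_add_smul_add_smul _ _ _ _ _ h] <;>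
    simp only [orient] <;> ring

lemma collinear_of_orient_eq_zero {p q r : ℝ × ℝ} (h : orient p q r = 0) :
    Collinear ℝ ({p, q, r} : Set (ℝ × ℝ)) := by
  rcases eq_or_ne p q with rfl | hpq
  · simpa using collinear_pair ℝ p r
  have hn : (q.1 - p.1) ^ 2 + (q.2 - p.2) ^ 2 ≠ 0 := by
    intro h0
    apply hpq
    ext <;> nlinarith [sq_nonneg (q.1 - p.1), sq_nonneg (q.2 - p.2)]
  -- the coefficient of the orthogonal projection of `r - p` onto `q - p`
  set k := ((r.1 - p.1) * (q.1 - p.1) + (r.2 - p.2) * (q.2 - p.2)) /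
    ((q.1 - p.1) ^ 2 + (q.2 - p.2) ^ 2)
  rw [collinear_iff_of_mem (Set.mem_insert p _)]
  refine ⟨q - p, ?_⟩
  rintro x (rfl | rfl | rfl)
  · exact ⟨0, by simp⟩
  · exact ⟨1, by simp⟩
  · refine ⟨k, ?_⟩
    unfold orient at h
    rw [vadd_eq_add]
    ext <;> simp only [k, Prod.fst_add, Prod.snd_add, Prod.smul_fst, Prod.smul_snd, Prod.fst_sub,
      Prod.snd_sub, smul_eq_mul] <;> field_simp
    · linear_combination -(q.2 - p.2) * h
    · linear_combination (q.1 - p.1) * h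

lemma orient_ne_zero_of_not_collinear {p q r : ℝ × ℝ}
    (h : ¬ Collinear ℝ ({p, q, r} : Set (ℝ × ℝ))) : orient p q r ≠ 0 :=
  mt collinear_of_orient_eq_zero h

lemma exists_barycentric {p q r : ℝ × ℝ} (h : ¬ Collinear ℝ ({p, q, r} : Set (ℝ × ℝ)))
    (x : ℝ × ℝ) : ∃ α β γ : ℝ, α + β + γ = 1 ∧ x = α • p + β • q + γ • r := by
  have hD := orient_ne_zero_of_not_collinear h
  refine ⟨orient q r x / orient p q r, orient r p x / orient p q r, orient p q x / orient p q r,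
    ?_, ?_⟩
  · field_simp
    unfold orient
    ring
  · ext <;> simp only [Prod.fst_add, Prod.snd_add, Prod.smul_fst, Prod.smul_snd, smul_eq_mul] <;>
      field_simp <;> unfold orient <;> ring

lemma barycentric_unique {p q r x : ℝ × ℝ} {α β γ α' β' γ' : ℝ}
    (h : ¬ Collinear ℝ ({p, q, r} : Set (ℝ × ℝ)))
    (hx : x = α • p + β • q + γ • r) (hs : α + β + γ = 1)
    (hx' : x = α' • p + β' • q + γ' • r) (hs' : α' + β' + γ' = 1) :
    α = α' ∧ β = β' ∧ γ = γ' := by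
  have hD := orient_ne_zero_of_not_collinear h
  obtain ⟨h₁, h₂, h₃⟩ := orient_barycentric hx hs
  obtain ⟨h₁', h₂', h₃'⟩ := orient_barycentric hx' hs'
  exact ⟨mul_right_cancel₀ hD (h₁.symm.trans h₁'), mul_right_cancel₀ hD (h₂.symm.trans h₂'),
    mul_right_cancel₀ hD (h₃.symm.trans h₃')⟩

lemma mem_convexHull_triple_iff {p q r x : ℝ × ℝ} {α β γ : ℝ}
    (h : ¬ Collinear ℝ ({p, q, r} : Set (ℝ × ℝ)))
    (hx : x = α • p + β • q + γ • r) (hs : α + β + γ = 1) :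
    x ∈ convexHull ℝ {p, q, r} ↔ 0 ≤ α ∧ 0 ≤ β ∧ 0 ≤ γ := by
  constructor
  · rw [convexHull_insert (Set.insert_nonempty _ _), convexHull_pair, mem_convexJoin]
    rintro ⟨_, rfl, _, ⟨g, k, hg, hk, hgk, rfl⟩, ⟨e, f, he, hf, hef, rfl⟩⟩
    obtain ⟨rfl, rfl, rfl⟩ := barycentric_unique h hx hs
      (α' := e) (β' := f * g) (γ' := f * k) (by module) (by linear_combination f * hgk + hef)
    exact ⟨he, mul_nonneg hf hg, mul_nonneg hf hk⟩
  · rintro ⟨hα, hβ, hγ⟩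
    have hmem := (convex_convexHull ℝ ({p, q, r} : Set (ℝ × ℝ))).sum_mem (t := Finset.univ)
      (w := ![α, β, γ]) (z := ![p, q, r]) (by simp [Fin.forall_fin_succ, hα, hβ, hγ])
      (by simp [Fin.sum_univ_three, hs]) (fun i _ ↦ subset_convexHull ℝ _ (by fin_cases i <;> simp))
    simpa [Fin.sum_univ_three, ← hx] using hmem

lemma mem_convexHull_triple_iff_of_vertex {p q r s : ℝ × ℝ} {α β γ : ℝ}
    (h : ¬ Collinear ℝ ({q, r, s} : Set (ℝ × ℝ)))
    (hs : s = α • p + β • q + γ • r) (hsum : α + β + γ = 1) :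
    p ∈ convexHull ℝ {q, r, s} ↔ 0 < α ∧ β ≤ 0 ∧ γ ≤ 0 := by
  have hα : α ≠ 0 := by
    rintro rfl
    apply orient_ne_zero_of_not_collinear h
    rw [(orient_barycentric hs hsum).1, zero_mul]
  have hp : p = (-β / α) • q + (-γ / α) • r + (1 / α) • s := by
    rw [hs]
    match_scalars <;> field_simp <;> ring
  rw [mem_convexHull_triple_iff h hp (by field_simp; linarith)]
  rcases hα.lt_or_gt with hneg | hpos
  · exact iff_of_false (fun h ↦ (one_div_neg.2 hneg).not_ge h.2.2) (fun h ↦ lt_asymm hneg h.1)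
  · simp only [le_div_iff₀ hpos, zero_mul, neg_nonneg, zero_le_one, hpos, true_and, and_true]

lemma segCross_comm (p q r s : ℝ × ℝ) : SegCross p q r s ↔ SegCross r s p q := by
  rw [SegCross, SegCross, Set.inter_comm]

lemma segCross_iff_barycentric {p q r s : ℝ × ℝ} {α β γ : ℝ}
    (h : ¬ Collinear ℝ ({p, q, r} : Set (ℝ × ℝ)))
    (hs : s = α • p + β • q + γ • r) (hsum : α + β + γ = 1) :
    SegCross p q r s ↔ γ < 0 ∧ 0 < α ∧ 0 < β := by
  constructor
  · rintro ⟨x, ⟨e, f, he, hf, hef, rfl⟩, ⟨g, k, hg, hk, hgk, hx⟩⟩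
    have hxr : e • p + f • q = (k * α) • p + (k * β) • q + (g + k * γ) • r := by
      rw [← hx, hs]; module
    obtain ⟨hkα, hkβ, hkγ⟩ := barycentric_unique h hxr (by linear_combination k * hsum + hgk)
      (show e • p + f • q = e • p + f • q + (0 : ℝ) • r by simp) (by linarith)
    exact ⟨by nlinarith, pos_of_mul_pos_right (hkα ▸ he) hk.le,
      pos_of_mul_pos_right (hkβ ▸ hf) hk.le⟩
  · rintro ⟨hγ, hα, hβ⟩
    have hαβ : 0 < α + β := by linarith
    refine ⟨(α / (α + β)) • p + (β / (α + β)) • q,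
      ⟨_, _, div_pos hα hαβ, div_pos hβ hαβ, by field_simp, rfl⟩,
      ⟨-γ / (α + β), 1 / (α + β), div_pos (by linarith) hαβ, div_pos one_pos hαβ,
        by field_simp; linarith, ?_⟩⟩
    rw [hs]
    match_scalars <;> field_simp
    ring

-- `⇐`: by Krein–Milman, the hull of a finite set is the hull of its extreme points.
theorem Set.Finite.mem_extremePoints_convexHull_iff {E : Type*} [AddCommGroup E] [Module ℝ E]
    [TopologicalSpace E] [T2Space E] [IsTopologicalAddGroup E] [ContinuousSMul ℝ E]
    [LocallyConvexSpace ℝ E] {S : Set E} (hS : S.Finite) {x : E} (hx : x ∈ S) :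
    x ∈ (convexHull ℝ S).extremePoints ℝ ↔ x ∉ convexHull ℝ (S \ {x}) := by
  constructor
  · intro hext hmem
    rw [(convex_convexHull ℝ S).mem_extremePoints_iff_convex_sdiff] at hext
    exact (convexHull_min (Set.sdiff_subset_sdiff_left (subset_convexHull ℝ S)) hext.2 hmem).2 rfl
  · intro hx'
    by_contra hext
    have hsub : (convexHull ℝ S).extremePoints ℝ ⊆ S \ {x} := fun y hy ↦
      ⟨extremePoints_convexHull_subset hy, fun hyx ↦ hext (hyx ▸ hy)⟩
    have hcl : IsClosed (convexHull ℝ ((convexHull ℝ S).extremePoints ℝ)) :=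
      ((hS.subset extremePoints_convexHull_subset).isCompact_convexHull ℝ).isClosed
    have hhull : convexHull ℝ ((convexHull ℝ S).extremePoints ℝ) = convexHull ℝ S := by
      rw [← hcl.closure_eq,
        closure_convexHull_extremePoints (hS.isCompact_convexHull ℝ) (convex_convexHull ℝ S)]
    exact hx' (convexHull_mono hsub (hhull.ge (subset_convexHull ℝ S hx)))

lemma fourConvexPos_iff {a b c d : ℝ × ℝ}
    (hab : a ≠ b) (hac : a ≠ c) (had : a ≠ d) (hbc : b ≠ c) (hbd : b ≠ d) (hcd : c ≠ d) :
    FourConvexPos a b c d ↔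
      a ∉ convexHull ℝ {b, c, d} ∧ b ∉ convexHull ℝ {a, c, d} ∧
        c ∉ convexHull ℝ {a, b, d} ∧ d ∉ convexHull ℝ {a, b, c} := by
  have hfin : ({a, b, c, d} : Set (ℝ × ℝ)).Finite := by simp
  unfold FourConvexPos
  simp only [Set.mem_insert_iff, Set.mem_singleton_iff, forall_eq_or_imp, forall_eq]
  rw [hfin.mem_extremePoints_convexHull_iff (x := a) (by simp),
    hfin.mem_extremePoints_convexHull_iff (x := b) (by simp),
    hfin.mem_extremePoints_convexHull_iff (x := c) (by simp),
    hfin.mem_extremePoints_convexHull_iff (x := d) (by simp)]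
  simp [Set.insert_sdiff_of_notMem, hab, hac, had, hbc, hbd, hcd]

/-- For four distinct points, no three collinear: if they are in convex position then
exactly one of the three pairings into two segments crosses, and otherwise none does. -/
theorem pairings_of_four_points (a b c d : ℝ × ℝ)
    (hab : a ≠ b) (hac : a ≠ c) (had : a ≠ d) (hbc : b ≠ c) (hbd : b ≠ d) (hcd : c ≠ d)
    (habc : ¬ Collinear ℝ ({a, b, c} : Set (ℝ × ℝ)))
    (habd : ¬ Collinear ℝ ({a, b, d} : Set (ℝ × ℝ)))
    (hacd : ¬ Collinear ℝ ({a, c, d} : Set (ℝ × ℝ)))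
    (hbcd : ¬ Collinear ℝ ({b, c, d} : Set (ℝ × ℝ))) :
    (FourConvexPos a b c d →
      ((SegCross a b c d ∧ ¬ SegCross a c b d ∧ ¬ SegCross a d b c) ∨
       (¬ SegCross a b c d ∧ SegCross a c b d ∧ ¬ SegCross a d b c) ∨
       (¬ SegCross a b c d ∧ ¬ SegCross a c b d ∧ SegCross a d b c))) ∧
    (¬ FourConvexPos a b c d →
      (¬ SegCross a b c d ∧ ¬ SegCross a c b d ∧ ¬ SegCross a d b c)) := by
  obtain ⟨α, β, γ, hsum, hd⟩ := exists_barycentric habc d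
  have hacb : ¬ Collinear ℝ ({a, c, b} : Set (ℝ × ℝ)) := by rwa [Set.pair_comm]
  have hbca : ¬ Collinear ℝ ({b, c, a} : Set (ℝ × ℝ)) := by
    rwa [Set.insert_comm, Set.pair_comm] at habc
  rw [fourConvexPos_iff hab hac had hbc hbd hcd,
    mem_convexHull_triple_iff_of_vertex hbcd hd hsum,
    mem_convexHull_triple_iff_of_vertex hacd (α := β) (β := α) (γ := γ)
      (by rw [hd]; abel) (by linarith),
    mem_convexHull_triple_iff_of_vertex habd (α := γ) (β := α) (γ := β)
      (by rw [hd]; abel) (by linarith),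
    mem_convexHull_triple_iff habc hd hsum,
    segCross_iff_barycentric habc hd hsum,
    segCross_iff_barycentric hacb (α := α) (β := γ) (γ := β) (by rw [hd]; abel) (by linarith),
    segCross_comm a d,
    segCross_iff_barycentric hbca (α := β) (β := γ) (γ := α) (by rw [hd]; abel) (by linarith)]
  grind
end

section
/- In every convex drawing σ of the graph H, every cycle edge e of H avoids at least one other edge of H; that is, there exists an edge f of H with e ∩ f = ∅ such that e and f do not cross in σ. -/
/-- The graph `H`: a 9-cycle on the vertices `0, …, 8` (representing `v₀, …, v₈`)
together with a central vertex `9` (representing `z`) adjacent to `0`, `3` and `6`. -/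
def graphH : SimpleGraph (Fin 10) :=
  SimpleGraph.fromEdgeSet
    {s((0 : Fin 10), 1), s((1 : Fin 10), 2), s((2 : Fin 10), 3), s((3 : Fin 10), 4),
     s((4 : Fin 10), 5), s((5 : Fin 10), 6), s((6 : Fin 10), 7), s((7 : Fin 10), 8),
     s((8 : Fin 10), 0), s((9 : Fin 10), 0), s((9 : Fin 10), 3), s((9 : Fin 10), 6)}

/-- The nine cycle edges of `H`. -/
def cycleEdgesH : Set (Sym2 (Fin 10)) :=
  {s((0 : Fin 10), 1), s((1 : Fin 10), 2), s((2 : Fin 10), 3), s((3 : Fin 10), 4),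
   s((4 : Fin 10), 5), s((5 : Fin 10), 6), s((6 : Fin 10), 7), s((7 : Fin 10), 8),
   s((8 : Fin 10), 0)}

/-! If a cycle edge `e = ab` crossed every edge of `H` disjoint from it, then every such edge would
join the two arcs into which the chord `ab` cuts the circle, so "lying on the arc from `a` to `b`"
would properly `2`-colour these edges. But one of the three `5`-cycles `z v₃ᵢ v₃ᵢ₊₁ v₃ᵢ₊₂ v₃ᵢ₊₃ z`
of `H` avoids both `a` and `b`, and an odd cycle is not `2`-colourable. -/

open SimpleGraph

lemma not_inArc_self {n : ℕ} (x z : ZMod n) : ¬ InArc x x z := by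
  simp [InArc]

lemma inArc_swap_iff {n : ℕ} [NeZero n] {x y z : ZMod n} (hxy : x ≠ y) (hzx : z ≠ x)
    (hzy : z ≠ y) : InArc y x z ↔ ¬ InArc x y z := by
  obtain ⟨u, rfl⟩ : ∃ u, z = u + x := ⟨z - x, by ring⟩
  obtain ⟨v, rfl⟩ : ∃ v, y = v + x := ⟨y - x, by ring⟩
  -- both arcs reduce to comparing `u.val` with `v.val`, which differ as `z ≠ y`
  have hu : u ≠ 0 := by rintro rfl; simp at hzx
  have hv : NeZero v := ⟨by rintro rfl; simp at hxy⟩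
  have huv : u.val ≠ v.val := fun h => hzy (by rw [ZMod.val_injective n h])
  have hneg : (x - (v + x)).val = n - v.val := by
    rw [show x - (v + x) = -v by ring, ZMod.val_neg_of_ne_zero]
  have hdiff : (u + x - (v + x)).val =
      if v.val ≤ u.val then u.val - v.val else n - (v.val - u.val) := by
    rw [show u + x - (v + x) = u - v by ring]
    split_ifs with h
    · exact ZMod.val_sub h
    · have : NeZero (v - u) := ⟨sub_ne_zero.mpr fun h' => huv (by rw [h'])⟩
      rw [show u - v = -(v - u) by ring, ZMod.val_neg_of_ne_zero, ZMod.val_sub (by omega)]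
  simp only [InArc, add_sub_cancel_right, hneg, hdiff]
  have := u.val_lt
  have := (ZMod.val_pos).mpr hu
  split_ifs <;> omega

section ConvexDrawing

variable {V : Type*} {n : ℕ} {σ : V → ZMod n}

lemma ConvexCross.not_isDiag {e f : Sym2 V} (h : ConvexCross σ e f) : ¬ e.IsDiag := by
  obtain ⟨-, a, b, c, d, rfl, -, hx⟩ := h
  rintro (rfl : a = b)
  exact (Xor.or hx).elim (not_inArc_self _ _) (not_inArc_self _ _)

lemma ConvexCross.not_inArc_iff [NeZero n] (hσ : Function.Injective σ) {a b c d : V}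
    (h : ConvexCross σ s(a, b) s(c, d)) :
    ¬ (InArc (σ a) (σ b) (σ c) ↔ InArc (σ a) (σ b) (σ d)) := by
  have hab : a ≠ b := Sym2.mk_isDiag_iff.not.mp h.not_isDiag
  obtain ⟨hind, a', b', c', d', he, hf, hx⟩ := h
  have hc : c ∉ s(a, b) := fun hc => hind c hc (Sym2.mem_mk_left c d)
  have hd : d ∉ s(a, b) := fun hd => hind d hd (Sym2.mem_mk_right c d)
  simp only [Sym2.mem_iff, not_or] at hc hd
  have hswap : ∀ x, x ≠ a → x ≠ b → (InArc (σ b) (σ a) (σ x) ↔ ¬ InArc (σ a) (σ b) (σ x)) :=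
    fun x hxa hxb => inArc_swap_iff (hσ.ne hab) (hσ.ne hxa) (hσ.ne hxb)
  replace hx := (xor_iff_not_iff _ _).mp hx
  rw [Sym2.eq_iff] at he hf
  rcases he with ⟨rfl, rfl⟩ | ⟨rfl, rfl⟩ <;> rcases hf with ⟨rfl, rfl⟩ | ⟨rfl, rfl⟩
  · exact hx
  · exact fun h => hx h.symm
  · rwa [hswap c hc.1 hc.2, hswap d hd.1 hd.2, not_iff_not] at hx
  · rw [hswap c hc.1 hc.2, hswap d hd.1 hd.2, not_iff_not] at hx
    exact fun h => hx h.symm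

def crossingGraph (σ : V → ZMod n) (e : Sym2 V) : SimpleGraph V :=
  SimpleGraph.fromEdgeSet {f | ConvexCross σ e f}

/-- The two sides of the chord `ab` properly colour its crossing graph. -/
lemma crossingGraph_colorable_two [NeZero n] (hσ : Function.Injective σ) (a b : V) :
    (crossingGraph σ s(a, b)).Colorable 2 := by
  have c : (crossingGraph σ s(a, b)).Coloring Prop :=
    Coloring.mk (fun x => InArc (σ a) (σ b) (σ x)) fun hxy hP =>
      hxy.1.not_inArc_iff hσ (iff_of_eq hP)
  simpa using c.colorable

theorem exists_mem_edges_not_convexCross [NeZero n] (hσ : Function.Injective σ)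
    {G : SimpleGraph V} (e : Sym2 V) {u : V} (w : G.Walk u u) (hw : Odd w.length)
    (hdisj : ∀ x ∈ e, x ∉ w.support) :
    ∃ f ∈ w.edges, Sym2Indep e f ∧ ¬ ConvexCross σ e f := by
  induction e using Sym2.ind with | h a b => ?_
  have hindep : ∀ f ∈ w.edges, Sym2Indep s(a, b) f :=
    fun f hf x hx hxf => hdisj x hx (w.mem_support_of_mem_edges hf hxf)
  by_contra! hcross
  have hw' : ∀ f ∈ w.edges, f ∈ (crossingGraph σ s(a, b)).edgeSet := fun f hf => by
    rw [crossingGraph, edgeSet_fromEdgeSet]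
    exact ⟨hcross f hf (hindep f hf), G.not_isDiag_of_mem_edgeSet (w.edges_subset_edgeSet hf)⟩
  have h3 := (w.transfer _ hw').three_le_chromaticNumber_of_odd_loop (by rwa [w.length_transfer])
  have h2 := (crossingGraph_colorable_two hσ a b).chromaticNumber_le
  exact absurd (h3.trans h2) (by decide)

end ConvexDrawing

def pentagonH (a b c d : Fin 10) (hza : graphH.Adj 9 a := by simp [graphH])
    (hab : graphH.Adj a b := by simp [graphH]) (hbc : graphH.Adj b c := by simp [graphH])
    (hcd : graphH.Adj c d := by simp [graphH]) (hzd : graphH.Adj 9 d := by simp [graphH]) :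
    graphH.Walk 9 9 :=
  .cons hza <| .cons hab <| .cons hbc <| .cons hcd <| .cons hzd.symm .nil

/-- The three `5`-cycles `z v₃ᵢ v₃ᵢ₊₁ v₃ᵢ₊₂ v₃ᵢ₊₃ z` of `H`. -/
def fanCycleH : Fin 3 → graphH.Walk 9 9
  | 0 => pentagonH 0 1 2 3
  | 1 => pentagonH 3 4 5 6
  | 2 => pentagonH 6 7 8 0

lemma length_fanCycleH (i : Fin 3) : (fanCycleH i).length = 5 := by
  fin_cases i <;> rfl

lemma exists_fanCycleH_disjoint {e : Sym2 (Fin 10)} (he : e ∈ cycleEdgesH) :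
    ∃ i, ∀ x ∈ e, x ∉ (fanCycleH i).support := by
  simp only [cycleEdgesH, Set.mem_insert_iff, Set.mem_singleton_iff] at he
  rcases he with rfl | rfl | rfl | rfl | rfl | rfl | rfl | rfl | rfl <;> decide

/-- In any convex drawing of `H`, any cycle edge avoids (is independent from and does not
cross) at least one other edge of `H`. -/
theorem cycle_edge_avoids_some_edge
    (σ : Fin 10 → ZMod (Fintype.card (Fin 10))) (hσ : Function.Injective σ)
    (e : Sym2 (Fin 10)) (he : e ∈ cycleEdgesH) :
    ∃ f ∈ graphH.edgeSet, Sym2Indep e f ∧ ¬ ConvexCross σ e f := by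
  obtain ⟨i, hdisj⟩ := exists_fanCycleH_disjoint he
  have hodd : Odd (fanCycleH i).length := by rw [length_fanCycleH]; decide
  obtain ⟨f, hf, hindep, hcross⟩ := exists_mem_edges_not_convexCross hσ e _ hodd hdisj
  exact ⟨f, (fanCycleH i).edges_subset_edgeSet hf, hindep, hcross⟩
end

section
/- For every cyclic arrangement of the vertices v₀, …, v₈ of the 9-cycle C₉ (an injective map of the nine vertices into ZMod 9), the number of cycle edges of span at most 2 is never exactly one; equivalently, if eight of the nine cycle edges have span 3, then the ninth cycle edge also has span 3. -/
/-- The span of the cycle edge `v_i v_{i+1}` of `C₉` in the cyclic arrangement `σ`: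
the edge splits the remaining seven vertices into two cyclic arcs, and the span is the
number of vertices in the smaller arc. -/
noncomputable def spanC9 (σ : Fin 9 → ZMod 9) (i : Fin 9) : ℕ :=
  min {j : Fin 9 | j ≠ i ∧ j ≠ i + 1 ∧ InArc (σ i) (σ (i + 1)) (σ j)}.ncard
      {j : Fin 9 | j ≠ i ∧ j ≠ i + 1 ∧ InArc (σ (i + 1)) (σ i) (σ j)}.ncard

section InArc

variable {n : ℕ} {x y z : ZMod n}

lemma InArc.ne_left (h : InArc x y z) : z ≠ x := by
  rintro rfl
  simp [InArc] at h

lemma InArc.ne_right (h : InArc x y z) : z ≠ y := by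
  rintro rfl
  exact h.2.ne rfl

lemma ncard_setOf_inArc [NeZero n] (x y : ZMod n) :
    {z | InArc x y z}.ncard = (y - x).val - 1 := by
  set S := {w : ZMod n | 0 < w.val ∧ w.val < (y - x).val}
  have hval : ZMod.val '' S = Set.Ioo 0 (y - x).val := by
    ext m
    refine ⟨fun ⟨w, hw, hwm⟩ => hwm ▸ hw, fun hm => ?_⟩
    have hmval : (m : ZMod n).val = m := ZMod.val_cast_of_lt (hm.2.trans (ZMod.val_lt _))
    exact ⟨m, show 0 < _ ∧ _ < _ by rw [hmval]; exact hm, hmval⟩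
  calc {z | InArc x y z}.ncard
      = ((· - x) ⁻¹' S).ncard := rfl
    _ = (ZMod.val '' S).ncard :=
        (Set.ncard_preimage_of_injective_subset_range sub_left_injective
          fun w _ => ⟨w + x, add_sub_cancel_right w x⟩).trans
          (Set.ncard_image_of_injective _ (ZMod.val_injective n)).symm
    _ = (y - x).val - 1 := by
        rw [hval, Set.ncard_eq_toFinset_card', Set.toFinset_Ioo, Nat.card_Ioo, Nat.sub_zero]

lemma setOf_ne_ne_inArc_eq_preimage {ι : Type*} (σ : ι → ZMod n) (a b : ι) :
    {j | j ≠ a ∧ j ≠ b ∧ InArc (σ a) (σ b) (σ j)} = σ ⁻¹' {z | InArc (σ a) (σ b) z} := by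
  ext j
  refine ⟨fun h => h.2.2, fun h => ⟨?_, ?_, h⟩⟩
  · exact fun hja => h.ne_left (congrArg σ hja)
  · exact fun hjb => h.ne_right (congrArg σ hjb)

end InArc

lemma spanC9_eq {σ : Fin 9 → ZMod 9} (hσ : Function.Injective σ) (i : Fin 9) :
    spanC9 σ i = min ((σ (i + 1) - σ i).val - 1) ((σ i - σ (i + 1)).val - 1) := by
  have hsurj : Function.Surjective σ :=
    ((Fintype.bijective_iff_injective_and_card σ).2 ⟨hσ, by simp⟩).2
  have hncard (S : Set (ZMod 9)) : (σ ⁻¹' S).ncard = S.ncard :=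
    Set.ncard_preimage_of_injective_subset_range hσ (by simp [hsurj.range_eq])
  rw [spanC9, setOf_ne_ne_inArc_eq_preimage]
  simp_rw [and_left_comm (a := _ ≠ i)]
  rw [setOf_ne_ne_inArc_eq_preimage, hncard, hncard, ncard_setOf_inArc, ncard_setOf_inArc]

lemma spanC9_le_two_iff {σ : Fin 9 → ZMod 9} (hσ : Function.Injective σ) (i : Fin 9) :
    spanC9 σ i ≤ 2 ↔ ¬(σ (i + 1) - σ i = 4 ∨ σ (i + 1) - σ i = -4) := by
  have key : ∀ d : ZMod 9, d ≠ 0 →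
      (min (d.val - 1) ((-d).val - 1) ≤ 2 ↔ ¬(d = 4 ∨ d = -4)) := by
    decide
  rw [spanC9_eq hσ, ← neg_sub (σ (i + 1))]
  exact key _ (sub_ne_zero.2 (hσ.ne (show i + 1 ≠ i by simp)))

lemma eq_of_eq_or_eq_neg_of_ne_neg {G : Type*} [InvolutiveNeg G] {a b c : G}
    (ha : a = c ∨ a = -c) (hb : b = c ∨ b = -c) (hab : b ≠ -a) : b = a := by
  rcases ha with rfl | rfl <;> rcases hb with rfl | rfl <;> simp_all

namespace Fin

variable {n : ℕ} [NeZero n]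

lemma sum_sub_succ_eq_zero {G : Type*} [AddCommGroup G] (σ : Fin n → G) :
    ∑ i, (σ (i + 1) - σ i) = 0 := by
  rw [Finset.sum_sub_distrib, sub_eq_zero]
  exact Equiv.sum_comp (Equiv.addRight 1) σ

lemma sub_succ_ne_neg_sub {G : Type*} [AddCommGroup G] {σ : Fin n → G}
    (hσ : Function.Injective σ) (hn : 2 < n) (i : Fin n) :
    σ (i + 1 + 1) - σ (i + 1) ≠ -(σ (i + 1) - σ i) := by
  rw [neg_sub, Ne, sub_left_inj, hσ.eq_iff, add_assoc, add_eq_left, Fin.ext_iff]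
  simp [Fin.val_add, Nat.mod_eq_of_lt hn]

/-- Removing `i₀` from the cycle leaves the path `i₀ + 1, i₀ + 2, …, i₀ - 1`. -/
lemma apply_eq_apply_succ_of_ne {α : Type*} {f : Fin n → α} {i₀ : Fin n}
    (hf : ∀ j, j ≠ i₀ → j + 1 ≠ i₀ → f (j + 1) = f j) {j : Fin n} (hj : j ≠ i₀) :
    f j = f (i₀ + 1) := by
  induction h : (j - (i₀ + 1)).val generalizing j with
  | zero => rw [Fin.val_eq_zero_iff, sub_eq_zero] at h; rw [h]
  | succ k ih =>
    have hj' : j - 1 ≠ i₀ := by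
      rintro rfl
      simp at h
    have hk : (j - 1 - (i₀ + 1)).val = k := by
      have hne : j - (i₀ + 1) ≠ 0 := fun h0 => by simp [h0] at h
      rw [sub_right_comm, Fin.val_sub_one_of_ne_zero hne, h, Nat.add_sub_cancel]
    calc f j = f (j - 1 + 1) := by rw [sub_add_cancel]
      _ = f (j - 1) := hf _ hj' (by rwa [sub_add_cancel])
      _ = f (i₀ + 1) := ih hj' hk

end Fin

/-- In any cyclic arrangement of the vertices of the 9-cycle `C₉`, the number of cycle
edges of span at most 2 is never exactly one; equivalently, if eight cycle edges have
span 3 then so does the ninth. -/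
theorem c9_spans_not_exactly_one_small (σ : Fin 9 → ZMod 9) (hσ : Function.Injective σ) :
    {i : Fin 9 | spanC9 σ i ≤ 2}.ncard ≠ 1 := by
  rw [Ne, Set.ncard_eq_one]
  rintro ⟨i₀, hi₀⟩
  set δ : Fin 9 → ZMod 9 := fun i => σ (i + 1) - σ i
  have hshort : ¬(δ i₀ = 4 ∨ δ i₀ = -4) :=
    (spanC9_le_two_iff hσ i₀).1 (hi₀ ▸ Set.mem_singleton i₀ : i₀ ∈ {i | spanC9 σ i ≤ 2})
  have hlong (j : Fin 9) (hj : j ≠ i₀) : δ j = 4 ∨ δ j = -4 := by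
    have : j ∉ {i | spanC9 σ i ≤ 2} := by rwa [hi₀]
    exact not_not.1 ((spanC9_le_two_iff hσ j).not.1 this)
  have hturn (j : Fin 9) : δ (j + 1) ≠ -δ j := Fin.sub_succ_ne_neg_sub hσ (by norm_num) j
  have hsum : ∑ j, δ j = 0 := Fin.sum_sub_succ_eq_zero σ
  clear_value δ
  have hconst (j : Fin 9) (hj : j ≠ i₀) : δ j = δ (i₀ + 1) :=
    Fin.apply_eq_apply_succ_of_ne (fun j hj hj' =>
      eq_of_eq_or_eq_neg_of_ne_neg (hlong j hj) (hlong _ hj') (hturn j)) hj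
  rw [← Finset.add_sum_erase _ _ (Finset.mem_univ i₀),
    Finset.sum_congr rfl fun j hj => hconst j (Finset.ne_of_mem_erase hj)] at hsum
  simp only [Finset.sum_const, Finset.mem_univ, Finset.card_erase_of_mem, Finset.card_univ,
    Fintype.card_fin, Nat.add_one_sub_one, nsmul_eq_mul, Nat.cast_ofNat] at hsum
  have h9 : (9 : ZMod 9) = 0 := rfl
  have hcyc : δ i₀ = δ (i₀ + 1) := by linear_combination hsum - δ (i₀ + 1) * h9
  exact hshort (hcyc ▸ hlong _ (by simp))
end
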